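/- arXiv:2604.10868 — 10 statements merged into one kernel-verified Lean document; each statement's English description precedes it below -/
import Mathlib

section
/- Let X and Y be finite sets and W : X → DCCone(Y) a game-theoretic channel, and let W(X) := ⋃_{x∈X} W(x). Then the capacity of the game-theoretic channel satisfies C(W) ≤ I(W(X)). -/
/-!
Fix `q` and a real `C` above `sup_{a ∈ W(X)} inf_{⟨p, a⟩ ≤ 0} D(p ‖ q)`, so that every bet `a`
can be answered by a law `pₐ` of nonpositive price within `C` bits of `q`. Given a winning code
with `L` messages, choose a message `m` whose decoding region has `qⁿ`-mass at most `1 / L`, and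
let nature draw `yᵢ` from `p_{wᵢ(m, y^{i-1})}`. Every bet then has nonpositive expected gain, so
the score guarantee makes decoding succeed with probability at least `1 - ε`; the chain rule puts
the law of `yⁿ` within `n C` bits of `qⁿ`, while a Fano-type bound needs at least
`(1 - ε) log₂ L - 1 / ln 2` bits. With `log₂ L ≥ n R - 1`, letting `n → ∞` and `ε → 0` gives
`R ≤ C`.
-/

open scoped BigOperators

noncomputable section

/-- The prefix `y^{i-1} = (y_0, …, y_{i-1})` of `y : Fin n → Y`, i.e. the first `i` entries. -/
def prefixOf {Y : Type*} {n : ℕ} (y : Fin n → Y) (i : Fin n) : Fin i.1 → Y :=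
  fun j => y ⟨j.1, j.2.trans i.2⟩

/-- `A ⊆ ℝ^Y` is a pricing downward closed (DC) cone. -/
def IsDCCone {Y : Type*} (A : Set (Y → ℝ)) : Prop :=
  (∀ a ∈ A, ∀ γ : ℝ, 0 ≤ γ → γ • a ∈ A) ∧
  (∀ a ∈ A, ∀ b : Y → ℝ, (∀ y, 0 ≤ b y) → a - b ∈ A)

/-- The channel coding game `(W, n, L, ε)` is a guaranteed win. -/
def GuaranteedWin {X Y : Type*} (W : X → Set (Y → ℝ)) (n L : ℕ) (ε : ℝ) : Prop :=
  ∃ (x : Fin L → Fin n → X)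
    (w : (i : Fin n) → Fin L → (Fin i.1 → Y) → (Y → ℝ))
    (dec : (Fin n → Y) → Fin L),
    (∀ (i : Fin n) (m : Fin L) (ypre : Fin i.1 → Y), w i m ypre ∈ W (x m i)) ∧
    (∀ (m : Fin L) (y : Fin n → Y),
      (∑ i, w i m (prefixOf y i) (y i)) - (if dec y = m then 0 else 1) ≥ -ε)

/-- Game-theoretic capacity: the sup of nonnegative rates `R` such that for all `n₀` and
`0 < ε < 1` there is `n ≥ n₀` making the game `(W, n, ⌊2^{nR}⌋, ε)` a guaranteed win.
By the `sSup ∅ = ⊥` convention, the capacity is `-∞` if no such rate exists. -/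
def capacity {X Y : Type*} (W : X → Set (Y → ℝ)) : EReal :=
  sSup {c : EReal | ∃ R : ℝ, 0 ≤ R ∧ c = (R : EReal) ∧
    ∀ n₀ : ℕ, 0 < n₀ → ∀ ε : ℝ, 0 < ε → ε < 1 →
      ∃ n, n₀ ≤ n ∧ GuaranteedWin W n ⌊(2 : ℝ) ^ ((n : ℝ) * R)⌋₊ ε}

/-- Probability mass functions on a finite set `Y`. -/
def probSimplex (Y : Type*) [Fintype Y] : Set (Y → ℝ) :=
  {p | (∀ y, 0 ≤ p y) ∧ ∑ y, p y = 1}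

/-- KL divergence in bits, valued in the extended reals. -/
def KLdiv {Y : Type*} [Fintype Y] (p q : Y → ℝ) : EReal :=
  if ∀ y, q y = 0 → p y = 0 then
    (((∑ y, if p y = 0 then 0 else p y * Real.logb 2 (p y / q y)) : ℝ) : EReal)
  else ⊤

/-- Information capacity `I(A)` of a pricing DC cone `A`.  The conventions
`I(∅) = -∞` and `I(ℝ^Y) = +∞` follow from `⨆ (empty) = ⊥` and `⨅ (empty) = ⊤`. -/
def infoCap {Y : Type*} [Fintype Y] (A : Set (Y → ℝ)) : EReal :=
  ⨅ q ∈ probSimplex Y, ⨆ a ∈ A,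
    ⨅ p ∈ {p ∈ probSimplex Y | ∑ y, p y * a y ≤ 0}, KLdiv p q

section SequentialMeasure

variable {Y : Type*}

lemma prefixOf_snoc_castSucc {n : ℕ} (z : Fin n → Y) (v : Y) (i : Fin n) :
    prefixOf (Fin.snoc z v : Fin (n + 1) → Y) i.castSucc = prefixOf z i :=
  funext fun j => Fin.snoc_castSucc (α := fun _ => Y) (p := z) (x := v) ⟨j, j.2.trans i.2⟩

lemma prefixOf_snoc_last {n : ℕ} (z : Fin n → Y) (v : Y) :
    prefixOf (Fin.snoc z v : Fin (n + 1) → Y) (Fin.last n) = z :=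
  funext fun j => Fin.snoc_castSucc (α := fun _ => Y) (p := z) (x := v) j

@[to_additive]
lemma prod_prefixOf_snoc {M : Type*} [CommMonoid M] {n : ℕ}
    (G : (i : Fin (n + 1)) → (Fin i → Y) → Y → M) (z : Fin n → Y) (v : Y) :
    ∏ i, G i (prefixOf (Fin.snoc z v : Fin (n + 1) → Y) i) ((Fin.snoc z v : Fin (n + 1) → Y) i) =
      (∏ i : Fin n, G i.castSucc (prefixOf z i) (z i)) * G (Fin.last n) z v := by
  simp only [Fin.prod_univ_castSucc, prefixOf_snoc_castSucc, prefixOf_snoc_last, Fin.snoc_castSucc,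
    Fin.snoc_last]

/-- The law of `y₀, …, y_{n-1}` when `yᵢ` is drawn from `K i (y₀, …, y_{i-1})`. -/
def seqMeas {n : ℕ} (K : (i : Fin n) → (Fin i → Y) → Y → ℝ) (y : Fin n → Y) : ℝ :=
  ∏ i, K i (prefixOf y i) (y i)

lemma seqMeas_snoc {n : ℕ} (K : (i : Fin (n + 1)) → (Fin i → Y) → Y → ℝ)
    (z : Fin n → Y) (v : Y) :
    seqMeas K (Fin.snoc z v) = seqMeas (fun i : Fin n => K i.castSucc) z * K (Fin.last n) z v :=
  prod_prefixOf_snoc K z v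

lemma seqMeas_nonneg {n : ℕ} {K : (i : Fin n) → (Fin i → Y) → Y → ℝ}
    (hK : ∀ i z v, 0 ≤ K i z v) (y : Fin n → Y) : 0 ≤ seqMeas K y :=
  Finset.prod_nonneg fun i _ => hK i _ _

variable [Fintype Y]

lemma sum_eq_sum_sum_snoc {n : ℕ} (f : (Fin (n + 1) → Y) → ℝ) :
    ∑ y, f y = ∑ z : Fin n → Y, ∑ v, f (Fin.snoc z v) := by
  rw [← (Fin.snocEquiv fun _ => Y).sum_comp, Fintype.sum_prod_type_right]
  rfl

lemma sum_seqMeas {n : ℕ} {K : (i : Fin n) → (Fin i → Y) → Y → ℝ}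
    (hK : ∀ i z, ∑ v, K i z v = 1) : ∑ y, seqMeas K y = 1 := by
  induction n with
  | zero => simp [seqMeas]
  | succ n ih =>
    simp only [sum_eq_sum_sum_snoc, seqMeas_snoc, ← Finset.mul_sum, hK, mul_one]
    exact ih fun i => hK i.castSucc

lemma sum_seqMeas_mul_sum_le {n : ℕ} {K F : (i : Fin n) → (Fin i → Y) → Y → ℝ} {c : ℝ}
    (hK : ∀ i z, K i z ∈ probSimplex Y) (hF : ∀ i z, ∑ v, K i z v * F i z v ≤ c) :
    ∑ y, seqMeas K y * ∑ i, F i (prefixOf y i) (y i) ≤ n * c := by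
  induction n with
  | zero => simp
  | succ n ih =>
    set μ := seqMeas fun i : Fin n => K i.castSucc
    set S : (Fin n → Y) → ℝ := fun z => ∑ i : Fin n, F i.castSucc (prefixOf z i) (z i)
    have hμ : ∀ z, 0 ≤ μ z := seqMeas_nonneg fun i z => (hK i.castSucc z).1
    calc ∑ y, seqMeas K y * ∑ i, F i (prefixOf y i) (y i)
        = ∑ z, μ z * (S z * ∑ v, K (Fin.last n) z v +
            ∑ v, K (Fin.last n) z v * F (Fin.last n) z v) := by
          rw [sum_eq_sum_sum_snoc]
          refine Finset.sum_congr rfl fun z _ => ?_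
          simp only [seqMeas_snoc, sum_prefixOf_snoc, Finset.mul_sum, ← Finset.sum_add_distrib]
          exact Finset.sum_congr rfl fun v _ => by ring
      _ ≤ ∑ z, (μ z * S z + μ z * c) := by
          refine Finset.sum_le_sum fun z _ => ?_
          rw [(hK (Fin.last n) z).2, mul_one, mul_add]
          exact add_le_add_right (mul_le_mul_of_nonneg_left (hF (Fin.last n) z) (hμ z)) _
      _ ≤ n * c + c := by
          rw [Finset.sum_add_distrib, ← Finset.sum_mul, sum_seqMeas fun i z => (hK i.castSucc z).2,
            one_mul]
          exact add_le_add_left (ih (fun i => hK i.castSucc) fun i => hF i.castSucc) c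
      _ = (n + 1 : ℕ) * c := by push_cast; ring

end SequentialMeasure

section KLTerm

open Real

/-- The summand of `KLdiv`. -/
def klTerm (a b : ℝ) : ℝ := if a = 0 then 0 else a * logb 2 (a / b)

lemma le_of_KLdiv_le {Y : Type*} [Fintype Y] {p q : Y → ℝ} {C : ℝ} (h : KLdiv p q ≤ C) :
    (∀ y, q y = 0 → p y = 0) ∧ ∑ y, klTerm (p y) (q y) ≤ C := by
  unfold KLdiv at h
  split_ifs at h with hac
  · exact ⟨hac, EReal.coe_le_coe_iff.1 h⟩
  · exact absurd h (by simp)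

/-- From `log x ≥ 1 - x⁻¹` at `x = a / (b c)`. -/
lemma mul_logb_add_sub_div_le_klTerm {a b c : ℝ} (ha : 0 ≤ a) (hb : 0 ≤ b)
    (hab : b = 0 → a = 0) (hc : 0 < c) :
    a * logb 2 c + (a - b * c) / log 2 ≤ klTerm a b := by
  have hlog2 : 0 < log 2 := log_pos one_lt_two
  rcases ha.eq_or_lt with rfl | ha
  · simp only [klTerm, if_pos, zero_mul, zero_sub, zero_add]
    exact div_nonpos_of_nonpos_of_nonneg (neg_nonpos.2 (by positivity)) hlog2.le
  have hb : 0 < b := hb.lt_of_ne fun h => ha.ne' (hab h.symm)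
  have key : a - b * c ≤ a * log (a / (b * c)) := by
    have h := one_sub_inv_le_log_of_pos (by positivity : 0 < a / (b * c))
    rw [inv_div] at h
    calc a - b * c = a * (1 - b * c / a) := by field_simp
      _ ≤ a * log (a / (b * c)) := mul_le_mul_of_nonneg_left h ha.le
  have hsplit : a * logb 2 (a / b) = a * logb 2 c + a * log (a / (b * c)) / log 2 := by
    rw [show a / b = c * (a / (b * c)) by field_simp, logb, logb,
      log_mul hc.ne' (by positivity)]
    ring
  rw [klTerm, if_neg ha.ne', hsplit]
  gcongr

lemma sum_mul_logb_add_sub_div_le_sum_klTerm {α : Type*} {μ Q : α → ℝ} (s : Finset α) {c : ℝ}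
    (hc : 0 < c) (hμ : ∀ y, 0 ≤ μ y) (hQ : ∀ y, 0 ≤ Q y) (hac : ∀ y, Q y = 0 → μ y = 0) :
    (∑ y ∈ s, μ y) * logb 2 c + ((∑ y ∈ s, μ y) - (∑ y ∈ s, Q y) * c) / log 2 ≤
      ∑ y ∈ s, klTerm (μ y) (Q y) := by
  rw [Finset.sum_mul, Finset.sum_mul, ← Finset.sum_sub_distrib, Finset.sum_div,
    ← Finset.sum_add_distrib]
  exact Finset.sum_le_sum fun y _ => mul_logb_add_sub_div_le_klTerm (hμ y) (hQ y) (hac y) hc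

/-- Fano-type bound: test the divergence against the weight `L` on `E` and `1` off `E`. -/
lemma mul_logb_sub_le_sum_klTerm {α : Type*} [Fintype α] {μ Q : α → ℝ}
    (hμ : μ ∈ probSimplex α) (hQ : Q ∈ probSimplex α) (hac : ∀ y, Q y = 0 → μ y = 0)
    (E : Finset α) {L : ℝ} (hL : 0 < L) (hQE : L * ∑ y ∈ E, Q y ≤ 1) :
    (∑ y ∈ E, μ y) * logb 2 L - 1 / log 2 ≤ ∑ y, klTerm (μ y) (Q y) := by
  classical
  have hlog2 : 0 < log 2 := log_pos one_lt_two
  have hE := sum_mul_logb_add_sub_div_le_sum_klTerm E hL hμ.1 hQ.1 hac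
  have hEc := sum_mul_logb_add_sub_div_le_sum_klTerm Eᶜ one_pos hμ.1 hQ.1 hac
  rw [logb_one, mul_zero, zero_add, mul_one] at hEc
  have hμs := Finset.sum_add_sum_compl E μ
  have hQs := Finset.sum_add_sum_compl E Q
  have hQE0 : 0 ≤ ∑ y ∈ E, Q y := Finset.sum_nonneg fun y _ => hQ.1 y
  have hμEc0 : 0 ≤ ∑ y ∈ Eᶜ, μ y := Finset.sum_nonneg fun y _ => hμ.1 y
  have hmass : -1 / log 2 ≤ ((∑ y ∈ E, μ y) - (∑ y ∈ E, Q y) * L) / log 2 +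
      ((∑ y ∈ Eᶜ, μ y) - ∑ y ∈ Eᶜ, Q y) / log 2 := by
    rw [← add_div]
    gcongr
    linarith [hμ.2, hQ.2]
  have hsum := Finset.sum_add_sum_compl E fun y => klTerm (μ y) (Q y)
  rw [neg_div] at hmass
  linarith

end KLTerm

section ChainRule

open Real

/-- `klTerm a b / a` is the log-likelihood ratio `log₂ (a / b)`, and `0` where `a = 0`. -/
lemma mul_klTerm_div (a b : ℝ) : a * (klTerm a b / a) = klTerm a b := by
  by_cases ha : a = 0
  · simp [klTerm, ha]
  · exact mul_div_cancel₀ _ ha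

lemma klTerm_prod {ι : Type*} (s : Finset ι) {a b : ι → ℝ} (hab : ∀ i, b i = 0 → a i = 0) :
    klTerm (∏ i ∈ s, a i) (∏ i ∈ s, b i) =
      (∏ i ∈ s, a i) * ∑ i ∈ s, klTerm (a i) (b i) / a i := by
  by_cases h : ∏ i ∈ s, a i = 0
  · simp [klTerm, h]
  have ha : ∀ i ∈ s, a i ≠ 0 := fun i hi => Finset.prod_ne_zero_iff.1 h i hi
  have hb : ∀ i ∈ s, b i ≠ 0 := fun i hi hbi => ha i hi (hab i hbi)
  rw [klTerm, if_neg h, ← Finset.prod_div_distrib,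
    logb_prod _ _ fun i hi => div_ne_zero (ha i hi) (hb i hi)]
  congr 1
  refine Finset.sum_congr rfl fun i hi => ?_
  rw [klTerm, if_neg (ha i hi), mul_div_cancel_left₀ _ (ha i hi)]

variable {Y : Type*}

lemma seqMeas_eq_zero {n : ℕ} {K : (i : Fin n) → (Fin i → Y) → Y → ℝ} {q : Y → ℝ}
    (hac : ∀ i z v, q v = 0 → K i z v = 0) (y : Fin n → Y)
    (hy : seqMeas (fun _ _ => q) y = 0) : seqMeas K y = 0 := by
  obtain ⟨i, -, hi⟩ := Finset.prod_eq_zero_iff.1 hy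
  exact Finset.prod_eq_zero (Finset.mem_univ i) (hac i _ _ hi)

variable [Fintype Y]

lemma sum_klTerm_seqMeas_le {n : ℕ} {K : (i : Fin n) → (Fin i → Y) → Y → ℝ} {q : Y → ℝ}
    {C : ℝ} (hK : ∀ i z, K i z ∈ probSimplex Y) (hac : ∀ i z v, q v = 0 → K i z v = 0)
    (hKL : ∀ i z, ∑ v, klTerm (K i z v) (q v) ≤ C) :
    ∑ y, klTerm (seqMeas K y) (seqMeas (fun _ _ => q) y) ≤ n * C := by
  have hF : ∀ i z, ∑ v, K i z v * (klTerm (K i z v) (q v) / K i z v) ≤ C := fun i z => by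
    simpa only [mul_klTerm_div] using hKL i z
  refine le_of_eq_of_le (Finset.sum_congr rfl fun y _ => ?_) (sum_seqMeas_mul_sum_le hK hF)
  exact klTerm_prod _ fun i => hac i _ (y i)

end ChainRule

section Converse

open Real

variable {Y : Type*} [Fintype Y]

lemma one_sub_le_sum_seqMeas {n : ℕ} {K F : (i : Fin n) → (Fin i → Y) → Y → ℝ} {ε : ℝ}
    (hK : ∀ i z, K i z ∈ probSimplex Y) (hF : ∀ i z, ∑ v, K i z v * F i z v ≤ 0)
    {S : (Fin n → Y) → Prop} [DecidablePred S]
    (hscore : ∀ y, ∑ i, F i (prefixOf y i) (y i) - (if S y then 0 else 1) ≥ -ε) :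
    1 - ε ≤ ∑ y with S y, seqMeas K y := by
  have hgain := sum_seqMeas_mul_sum_le hK hF
  have hμ0 := seqMeas_nonneg fun i z => (hK i z).1
  calc 1 - ε
      ≤ ∑ y, seqMeas K y * (1 - ε - ∑ i, F i (prefixOf y i) (y i)) := by
        simp only [mul_sub, Finset.sum_sub_distrib, ← Finset.sum_mul,
          sum_seqMeas fun i z => (hK i z).2]
        linarith
    _ ≤ ∑ y, seqMeas K y * if S y then 1 else 0 := by
        refine Finset.sum_le_sum fun y _ => mul_le_mul_of_nonneg_left ?_ (hμ0 y)
        have := hscore y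
        split_ifs at this ⊢ <;> linarith
    _ = ∑ y with S y, seqMeas K y := by simp [Finset.sum_filter]

lemma GuaranteedWin.mul_logb_sub_le {X : Type*} {W : X → Set (Y → ℝ)} {n L : ℕ} {ε : ℝ}
    (hwin : GuaranteedWin W n L ε) (hL : 0 < L) {q : Y → ℝ} (hq : q ∈ probSimplex Y) {C : ℝ}
    (hresp : ∀ a ∈ ⋃ x, W x, ∃ p ∈ probSimplex Y, ∑ y, p y * a y ≤ 0 ∧ KLdiv p q ≤ C) :
    (1 - ε) * logb 2 L - 1 / log 2 ≤ n * C := by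
  classical
  obtain ⟨x, w, dec, hw, hscore⟩ := hwin
  choose! P hP hPa hPq using hresp
  have hmem : ∀ i m z, w i m z ∈ ⋃ x, W x := fun i m z => Set.mem_iUnion.2 ⟨_, hw i m z⟩
  set Qn := seqMeas (n := n) fun _ _ => q
  have hQn : Qn ∈ probSimplex (Fin n → Y) :=
    ⟨seqMeas_nonneg fun _ _ => hq.1, sum_seqMeas fun _ _ => hq.2⟩
  have : NeZero L := ⟨hL.ne'⟩
  obtain ⟨m, hm⟩ : ∃ m : Fin L, ∑ y with dec y = m, Qn y ≤ 1 / L :=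
    Fintype.exists_sum_fiber_le_of_sum_le_nsmul _ (by simp [hQn.2, hL.ne'])
  set K := fun i z => P (w i m z)
  have hK : ∀ i z, K i z ∈ probSimplex Y := fun i z => hP _ (hmem i m z)
  have hKq := fun i z => le_of_KLdiv_le (hPq _ (hmem i m z))
  have hμ : seqMeas K ∈ probSimplex (Fin n → Y) :=
    ⟨seqMeas_nonneg fun i z => (hK i z).1, sum_seqMeas fun i z => (hK i z).2⟩
  have hdecode : 1 - ε ≤ ∑ y with dec y = m, seqMeas K y :=
    one_sub_le_sum_seqMeas hK (fun i z => hPa _ (hmem i m z)) (hscore m)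
  have hfano := mul_logb_sub_le_sum_klTerm hμ hQn
    (seqMeas_eq_zero fun i z => (hKq i z).1) _ (Nat.cast_pos.2 hL)
    (by rwa [← le_div_iff₀' (Nat.cast_pos.2 hL)])
  have hchain := sum_klTerm_seqMeas_le hK (fun i z => (hKq i z).1) fun i z => (hKq i z).2
  have hlogL : 0 ≤ logb 2 L := logb_nonneg one_lt_two (Nat.one_le_cast.2 hL)
  linarith [mul_le_mul_of_nonneg_right hdecode hlogL]

end Converse

section Rates

open Real Filter Topology

lemma logb_sub_one_le_logb_floor {x : ℝ} (hx : 1 ≤ x) : logb 2 x - 1 ≤ logb 2 ⌊x⌋₊ := by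
  have hfloor : 1 ≤ (⌊x⌋₊ : ℝ) := by exact_mod_cast Nat.one_le_floor_iff _ |>.2 hx
  have hhalf : x / 2 ≤ ⌊x⌋₊ := by linarith [Nat.lt_floor_add_one x]
  calc logb 2 x - 1 = logb 2 (x / 2) := by
        rw [logb_div (by linarith) two_ne_zero, logb_self_eq_one one_lt_two]
    _ ≤ logb 2 ⌊x⌋₊ := logb_le_logb_of_le one_lt_two (by linarith) hhalf

lemma le_of_forall_mul_logb_floor_sub_le {R C : ℝ} (hR : 0 ≤ R)
    (h : ∀ n₀ : ℕ, 0 < n₀ → ∀ ε : ℝ, 0 < ε → ε < 1 → ∃ n : ℕ, n₀ ≤ n ∧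
      (1 - ε) * logb 2 ⌊(2 : ℝ) ^ ((n : ℝ) * R)⌋₊ - 1 / log 2 ≤ n * C) :
    R ≤ C := by
  set B := 1 + 1 / log 2
  have hB : 0 ≤ B := by positivity
  have hrate : ∀ ε : ℝ, 0 < ε → ε < 1 → ∀ n₀ : ℕ, 0 < n₀ → (1 - ε) * R ≤ C + B / n₀ := by
    intro ε hε hε1 n₀ hn₀
    obtain ⟨n, hn, hgame⟩ := h n₀ hn₀ ε hε hε1
    have hlog : (n : ℝ) * R - 1 ≤ logb 2 ⌊(2 : ℝ) ^ ((n : ℝ) * R)⌋₊ := by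
      have := logb_sub_one_le_logb_floor (x := (2 : ℝ) ^ ((n : ℝ) * R))
        (one_le_rpow one_le_two (by positivity))
      rwa [logb_rpow two_pos (by norm_num)] at this
    have hn₀n : (n₀ : ℝ) ≤ n := by exact_mod_cast hn
    have hgap : (n : ℝ) * ((1 - ε) * R - C) ≤ B := by
      have := mul_le_mul_of_nonneg_left hlog (by linarith : 0 ≤ 1 - ε)
      linarith
    rw [← sub_le_iff_le_add', le_div_iff₀' (by positivity)]
    rcases le_or_gt ((1 - ε) * R - C) 0 with hneg | hpos
    · exact (mul_nonpos_of_nonneg_of_nonpos (by positivity) hneg).trans hB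
    · exact (mul_le_mul_of_nonneg_right hn₀n hpos.le).trans hgap
  have hlimit : ∀ ε : ℝ, 0 < ε → ε < 1 → (1 - ε) * R ≤ C := fun ε hε hε1 => by
    refine ge_of_tendsto (by simpa using (tendsto_const_div_atTop_nhds_zero_nat B).const_add C) ?_
    filter_upwards [eventually_gt_atTop 0] with n₀ hn₀ using hrate ε hε hε1 n₀ hn₀
  refine le_of_tendsto (f := fun ε : ℝ => (1 - ε) * R) (x := 𝓝[>] 0) ?_ ?_
  · refine tendsto_nhdsWithin_of_tendsto_nhds ?_
    simpa using ((continuous_const.sub continuous_id).mul continuous_const).tendsto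
      (f := fun ε : ℝ => (1 - ε) * R) 0
  · filter_upwards [Ioo_mem_nhdsGT one_pos] with ε hε using hlimit ε hε.1 hε.2

end Rates

lemma exists_mem_probSimplex_of_iSup_lt {Y : Type*} [Fintype Y] {A : Set (Y → ℝ)}
    {q : Y → ℝ} {C : EReal}
    (hC : ⨆ a ∈ A, ⨅ p ∈ {p ∈ probSimplex Y | ∑ y, p y * a y ≤ 0}, KLdiv p q < C) :
    ∀ a ∈ A, ∃ p ∈ probSimplex Y, ∑ y, p y * a y ≤ 0 ∧ KLdiv p q ≤ C := by
  intro a ha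
  have hle := le_iSup₂_of_le (f := fun a (_ : a ∈ A) =>
    ⨅ p ∈ {p ∈ probSimplex Y | ∑ y, p y * a y ≤ 0}, KLdiv p q) a ha le_rfl
  obtain ⟨p, hp⟩ := iInf_lt_iff.1 (hle.trans_lt hC)
  obtain ⟨⟨hp, hpa⟩, hpq⟩ := iInf_lt_iff.1 hp
  exact ⟨p, hp, hpa, hpq.le⟩

theorem capacity_le_infoCap_general {X Y : Type*} [Fintype Y]
    (W : X → Set (Y → ℝ)) :
    capacity W ≤ infoCap (⋃ x, W x) := by
  refine sSup_le ?_
  rintro _ ⟨R, hR, rfl, hwin⟩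
  refine le_iInf₂ fun q hq => EReal.le_of_forall_lt_iff_le.1 fun C hC => ?_
  refine EReal.coe_le_coe_iff.2 (le_of_forall_mul_logb_floor_sub_le hR fun n₀ hn₀ ε hε hε1 => ?_)
  obtain ⟨n, hn, hgame⟩ := hwin n₀ hn₀ ε hε hε1
  exact ⟨n, hn, hgame.mul_logb_sub_le
    (Nat.floor_pos.2 (Real.one_le_rpow one_le_two (by positivity))) hq
    (exists_mem_probSimplex_of_iSup_lt hC)⟩

/-- The capacity of a game-theoretic channel is at most the information capacity of the
range cone `W(X) = ⋃_x W(x)`. -/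
theorem capacity_le_infoCap {X Y : Type*} [Fintype X] [Fintype Y]
    (W : X → Set (Y → ℝ)) (hW : ∀ x, IsDCCone (W x)) :
    capacity W ≤ infoCap (⋃ x, W x) :=
  capacity_le_infoCap_general W

end
end

section
/- Fix 0 < β < 1/2, positive integers n, L, and 0 < ε < 1. Let A := {a ∈ ℝ^{{0,1}} : (1−β)a(0) + βa(1) ≤ 0 or βa(0) + (1−β)a(1) ≤ 0}, and let W : {0} → DCCone({0,1}) with W(0) = A. Then there exists a feedback coding scheme for BSC(β) with blocklength n, message cardinality L and maximum error probability ε if and only if the channel coding game (W, n, L, ε) is a guaranteed win. -/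
open scoped BigOperators

noncomputable section

/- ====================== auxiliary machinery ====================== -/

section Aux

lemma fin2_cases (c : Fin 2) : c = 0 ∨ c = 1 := by fin_cases c <;> simp
lemma fin2_add11 (c : Fin 2) : c + 1 + 1 = c := by fin_cases c <;> rfl

lemma prefixOf_update_self {n : ℕ} (y : Fin n → Fin 2) (k : Fin n) (b : Fin 2) :
    prefixOf (Function.update y k b) k = prefixOf y k := by
  funext j
  simp only [prefixOf]
  exact Function.update_of_ne
    (by intro h; exact absurd (congrArg Fin.val h) (by simpa using j.2.ne)) _ _

lemma prefixOf_congr {n : ℕ} (y y' : Fin n → Fin 2) (j : Fin n)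
    (h : ∀ j' : Fin n, j'.1 < j.1 → y j' = y' j') : prefixOf y j = prefixOf y' j := by
  funext jj
  exact h ⟨jj.1, jj.2.trans j.2⟩ jj.2

lemma flip_lemma {n : ℕ} (k : Fin n) (F : (Fin n → Fin 2) → ℝ)
    (r : (Fin k.1 → Fin 2) → Fin 2 → ℝ)
    (hF : ∀ y b, F (Function.update y k b) = F y) :
    ∑ y : Fin n → Fin 2, F y * r (prefixOf y k) (y k)
      = (1/2) * ∑ y : Fin n → Fin 2, F y * (r (prefixOf y k) 0 + r (prefixOf y k) 1) := by
  set σ : (Fin n → Fin 2) → (Fin n → Fin 2) := fun y => Function.update y k (y k + 1) with hσ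
  have hinv : Function.Involutive σ := by
    intro y; funext j
    by_cases h : j = k
    · subst h; simp [σ, fin2_add11]
    · simp [σ, Function.update_of_ne h]
  have h1 : ∑ y : Fin n → Fin 2, F y * r (prefixOf y k) (y k + 1)
      = ∑ y : Fin n → Fin 2, F y * r (prefixOf y k) (y k) := by
    rw [← Function.Bijective.sum_comp hinv.bijective
      (fun y => F y * r (prefixOf y k) (y k))]
    refine Finset.sum_congr rfl fun y _ => ?_
    have h2 : prefixOf (σ y) k = prefixOf y k := prefixOf_update_self y k _
    have h3 : σ y k = y k + 1 := Function.update_self _ _ _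
    rw [show F (σ y) = F y from hF y _, h2, h3]
  have h4 : ∀ y : Fin n → Fin 2, r (prefixOf y k) (y k) + r (prefixOf y k) (y k + 1)
      = r (prefixOf y k) 0 + r (prefixOf y k) 1 := by
    intro y
    rcases fin2_cases (y k) with h | h <;> rw [h]
    · norm_num
    · rw [show (1 : Fin 2) + 1 = 0 by decide]; ring
  have h5 : ∑ y : Fin n → Fin 2, F y * (r (prefixOf y k) 0 + r (prefixOf y k) 1)
      = ∑ y : Fin n → Fin 2, F y * r (prefixOf y k) (y k)
        + ∑ y : Fin n → Fin 2, F y * r (prefixOf y k) (y k + 1) := by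
    rw [← Finset.sum_add_distrib]
    refine Finset.sum_congr rfl fun y _ => ?_
    rw [← h4 y]; ring
  rw [h5, h1]; ring

lemma step_lemma {n : ℕ} (d : (j : Fin n) → (Fin j.1 → Fin 2) → Fin 2 → ℝ) (k : Fin n) :
    ∑ y : Fin n → Fin 2, ∏ j : Fin n, (if j.1 < k.1 + 1 then d j (prefixOf y j) (y j) else 1)
      = (1/2) * ∑ y : Fin n → Fin 2,
          (∏ j : Fin n, (if j.1 < k.1 then d j (prefixOf y j) (y j) else 1))
            * (d k (prefixOf y k) 0 + d k (prefixOf y k) 1) := by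
  have hsplit : ∀ y : Fin n → Fin 2,
      (∏ j : Fin n, (if j.1 < k.1 + 1 then d j (prefixOf y j) (y j) else 1))
        = (∏ j : Fin n, (if j.1 < k.1 then d j (prefixOf y j) (y j) else 1))
            * d k (prefixOf y k) (y k) := by
    intro y
    have hfac : ∀ j : Fin n,
        (if j.1 < k.1 + 1 then d j (prefixOf y j) (y j) else 1)
          = (if j.1 < k.1 then d j (prefixOf y j) (y j) else 1)
            * (if j = k then d j (prefixOf y j) (y j) else 1) := by
      intro j
      rcases lt_trichotomy j.1 k.1 with h | h | h
      · rw [if_pos (by omega), if_pos h, if_neg (by intro hh; subst hh; omega), mul_one]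
      · have : j = k := Fin.ext h
        subst this
        rw [if_pos (by omega), if_neg (by omega), if_pos rfl, one_mul]
      · rw [if_neg (by omega), if_neg (by omega), if_neg (by intro hh; subst hh; omega), mul_one]
    rw [Finset.prod_congr rfl (fun j _ => hfac j), Finset.prod_mul_distrib,
      Finset.prod_ite_eq' Finset.univ k (fun j => d j (prefixOf y j) (y j)),
      if_pos (Finset.mem_univ k)]
  rw [Finset.sum_congr rfl (fun y _ => hsplit y)]
  refine flip_lemma k _ (d k) ?_
  intro y b
  refine Finset.prod_congr rfl fun j _ => ?_
  by_cases h : j.1 < k.1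
  · rw [if_pos h, if_pos h]
    have hjk : j ≠ k := by intro hh; subst hh; omega
    rw [Function.update_of_ne hjk]
    congr 1
    refine prefixOf_congr _ _ j fun j' hj' => ?_
    exact Function.update_of_ne (by intro hh; subst hh; omega) _ _
  · rw [if_neg h, if_neg h]

lemma sum_prod_eq_one {n : ℕ} (c : (j : Fin n) → (Fin j.1 → Fin 2) → Fin 2 → ℝ)
    (hc : ∀ (j : Fin n) (pre : Fin j.1 → Fin 2), c j pre 0 + c j pre 1 = 1) :
    ∑ y : Fin n → Fin 2, ∏ j : Fin n, c j (prefixOf y j) (y j) = 1 := by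
  have key : ∀ k : ℕ, k ≤ n →
      (2:ℝ)^k * ∑ y : Fin n → Fin 2,
        ∏ j : Fin n, (if j.1 < k then c j (prefixOf y j) (y j) else 1) = 2^n := by
    intro k
    induction k with
    | zero =>
      intro _
      simp only [pow_zero, one_mul]
      have : ∀ y : Fin n → Fin 2,
          (∏ j : Fin n, (if j.1 < 0 then c j (prefixOf y j) (y j) else 1)) = 1 := by
        intro y; exact Finset.prod_eq_one fun j _ => if_neg (by omega)
      rw [Finset.sum_congr rfl (fun y _ => this y), Finset.sum_const, nsmul_eq_mul, mul_one]
      rw [Finset.card_univ]; simp [Fintype.card_fun]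
    | succ k ih =>
      intro hk
      have hk' : k < n := by omega
      have hstep := step_lemma c ⟨k, hk'⟩
      simp only [show ((⟨k, hk'⟩ : Fin n) : ℕ) = k from rfl] at hstep
      rw [hstep]
      have : ∀ y : Fin n → Fin 2,
          (∏ j : Fin n, (if j.1 < k then c j (prefixOf y j) (y j) else 1))
            * (c ⟨k, hk'⟩ (prefixOf y ⟨k, hk'⟩) 0 + c ⟨k, hk'⟩ (prefixOf y ⟨k, hk'⟩) 1)
          = ∏ j : Fin n, (if j.1 < k then c j (prefixOf y j) (y j) else 1) := by
        intro y; rw [hc _ _, mul_one]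
      rw [Finset.sum_congr rfl fun y _ => this y]
      rw [← ih (by omega)]
      ring
  have h := key n le_rfl
  have hprod : ∀ y : Fin n → Fin 2,
      (∏ j : Fin n, (if j.1 < n then c j (prefixOf y j) (y j) else 1))
        = ∏ j : Fin n, c j (prefixOf y j) (y j) := by
    intro y; exact Finset.prod_congr rfl fun j _ => if_pos j.2
  rw [Finset.sum_congr rfl (fun y _ => hprod y)] at h
  have h2 : (2:ℝ)^n ≠ 0 := by positivity
  field_simp at h
  linarith [h]

lemma sum_prod_weighted_nonpos {n : ℕ} (c : (j : Fin n) → (Fin j.1 → Fin 2) → Fin 2 → ℝ)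
    (i : Fin n) (s : (Fin i.1 → Fin 2) → Fin 2 → ℝ)
    (hc0 : ∀ (j : Fin n) (pre : Fin j.1 → Fin 2) (b : Fin 2), 0 ≤ c j pre b)
    (hc1 : ∀ (j : Fin n) (pre : Fin j.1 → Fin 2), c j pre 0 + c j pre 1 = 1)
    (hs : ∀ pre : Fin i.1 → Fin 2, c i pre 0 * s pre 0 + c i pre 1 * s pre 1 ≤ 0) :
    ∑ y : Fin n → Fin 2,
      (∏ j : Fin n, c j (prefixOf y j) (y j)) * s (prefixOf y i) (y i) ≤ 0 := by
  set d : (j : Fin n) → (Fin j.1 → Fin 2) → Fin 2 → ℝ :=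
    fun j pre b => c j pre b *
      (if h : j = i then s (fun jj => pre (Fin.cast (by rw [h]) jj)) b else 1) with hd
  have hdi : ∀ (pre : Fin i.1 → Fin 2) (b : Fin 2), d i pre b = c i pre b * s pre b := by
    intro pre b
    simp only [hd, dif_pos rfl, dite_true]
    rfl
  have hdj : ∀ (j : Fin n), j ≠ i → ∀ (pre : Fin j.1 → Fin 2) (b : Fin 2),
      d j pre b = c j pre b := by
    intro j hj pre b
    simp only [hd, dif_neg hj, mul_one]
  have chain : ∀ k : ℕ, i.1 < k → k ≤ n →
      ∑ y : Fin n → Fin 2, ∏ j : Fin n,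
        (if j.1 < k then d j (prefixOf y j) (y j) else 1) ≤ 0 := by
    intro k
    induction k with
    | zero => omega
    | succ k ih =>
      intro hik hkn
      rcases Nat.lt_or_ge i.1 k with hik' | hik'
      · have hk' : k < n := by omega
        have hstep := step_lemma d ⟨k, hk'⟩
        simp only [show ((⟨k, hk'⟩ : Fin n) : ℕ) = k from rfl] at hstep
        rw [hstep]
        have hki : (⟨k, hk'⟩ : Fin n) ≠ i := by
          intro hh; apply absurd (congrArg Fin.val hh); simp; omega
        have heq : ∀ y : Fin n → Fin 2,
            (∏ j : Fin n, (if j.1 < k then d j (prefixOf y j) (y j) else 1))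
              * (d ⟨k, hk'⟩ (prefixOf y ⟨k, hk'⟩) 0 + d ⟨k, hk'⟩ (prefixOf y ⟨k, hk'⟩) 1)
            = ∏ j : Fin n, (if j.1 < k then d j (prefixOf y j) (y j) else 1) := by
          intro y
          rw [hdj _ hki, hdj _ hki, hc1, mul_one]
        rw [Finset.sum_congr rfl fun y _ => heq y]
        have := ih hik' (by omega)
        linarith
      · have hki : k = i.1 := by omega
        subst hki
        have hstep := step_lemma d i
        rw [hstep]
        have hterm : ∀ y : Fin n → Fin 2,
            (∏ j : Fin n, (if j.1 < i.1 then d j (prefixOf y j) (y j) else 1))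
              * (d i (prefixOf y i) 0 + d i (prefixOf y i) 1) ≤ 0 := by
          intro y
          refine mul_nonpos_of_nonneg_of_nonpos ?_ ?_
          · refine Finset.prod_nonneg fun j _ => ?_
            by_cases h : j.1 < i.1
            · rw [if_pos h, hdj _ (by intro hh; subst hh; omega)]
              exact hc0 _ _ _
            · rw [if_neg h]; norm_num
          · rw [hdi, hdi]; exact hs _
        have := Finset.sum_nonpos fun y (_ : y ∈ Finset.univ) => hterm y
        linarith
  have hfin := chain n (i.2) le_rfl
  have hprod : ∀ y : Fin n → Fin 2,
      (∏ j : Fin n, (if j.1 < n then d j (prefixOf y j) (y j) else 1))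
        = (∏ j : Fin n, c j (prefixOf y j) (y j)) * s (prefixOf y i) (y i) := by
    intro y
    rw [Finset.prod_congr rfl fun (j : Fin n) _ => if_pos j.2]
    have : ∀ j : Fin n, d j (prefixOf y j) (y j)
        = c j (prefixOf y j) (y j) * (if j = i then s (prefixOf y i) (y i) else 1) := by
      intro j
      by_cases h : j = i
      · subst h; rw [hdi, if_pos rfl]
      · rw [hdj _ h, if_neg h, mul_one]
    rw [Finset.prod_congr rfl fun j _ => this j, Finset.prod_mul_distrib,
      Finset.prod_ite_eq' Finset.univ i (fun _ => s (prefixOf y i) (y i)),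
      if_pos (Finset.mem_univ i)]
  rw [Finset.sum_congr rfl fun y _ => hprod y] at hfin
  exact hfin

/-- Transition probabilities of `BSC(β)`: `bscP β b y` is the probability of output `y`
given input `b`. -/
def bscP (β : ℝ) (b y : Fin 2) : ℝ := if y = b then 1 - β else β

lemma bscP_sum (β : ℝ) (b : Fin 2) : bscP β b 0 + bscP β b 1 = 1 := by
  rcases fin2_cases b with h | h <;> subst h <;> simp [bscP] <;> ring

lemma bscP_00 (β : ℝ) : bscP β 0 0 = 1 - β := by simp [bscP]
lemma bscP_01 (β : ℝ) : bscP β 0 1 = β := by simp [bscP]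
lemma bscP_10 (β : ℝ) : bscP β 1 0 = β := by simp [bscP]
lemma bscP_11 (β : ℝ) : bscP β 1 1 = 1 - β := by simp [bscP]

lemma bscP_nonneg {β : ℝ} (hβ0 : 0 ≤ β) (hβ1 : β ≤ 1) (b y : Fin 2) : 0 ≤ bscP β b y := by
  unfold bscP
  split <;> linarith

/-- The value function: conditional error probability of the feedback code `(f, g)`
for message `m` given the first `i` output symbols (read off from `y`). -/
def Vfun (β : ℝ) {n L : ℕ} (f : (i : Fin n) → Fin L → (Fin i.1 → Fin 2) → Fin 2)
    (g : (Fin n → Fin 2) → Fin L) (m : Fin L) (i : ℕ) (y : Fin n → Fin 2) : ℝ :=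
  ∑ z : Fin n → Fin 2, if ∀ j : Fin n, j.1 < i → z j = y j then
    (if g z = m then (0:ℝ) else 1)
      * ∏ j : Fin n, (if i ≤ j.1 then bscP β (f j m (prefixOf z j)) (z j) else 1)
  else 0

lemma Vfun_congr (β : ℝ) {n L : ℕ} (f : (i : Fin n) → Fin L → (Fin i.1 → Fin 2) → Fin 2)
    (g : (Fin n → Fin 2) → Fin L) (m : Fin L) (i : ℕ) (y y' : Fin n → Fin 2)
    (h : ∀ j : Fin n, j.1 < i → y j = y' j) :
    Vfun β f g m i y = Vfun β f g m i y' := by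
  unfold Vfun
  refine Finset.sum_congr rfl fun z _ => ?_
  refine if_congr ?_ rfl rfl
  constructor
  · intro hz j hj; rw [hz j hj, h j hj]
  · intro hz j hj; rw [hz j hj, ← h j hj]

lemma Vfun_top (β : ℝ) {n L : ℕ} (f : (i : Fin n) → Fin L → (Fin i.1 → Fin 2) → Fin 2)
    (g : (Fin n → Fin 2) → Fin L) (m : Fin L) (y : Fin n → Fin 2) :
    Vfun β f g m n y = if g y = m then (0:ℝ) else 1 := by
  unfold Vfun
  have h1 : ∀ z : Fin n → Fin 2, (∀ j : Fin n, j.1 < n → z j = y j) ↔ z = y := by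
    intro z
    constructor
    · intro h; funext j; exact h j j.2
    · intro h j _; rw [h]
  have h2 : ∀ z : Fin n → Fin 2,
      (if ∀ j : Fin n, j.1 < n → z j = y j then
        (if g z = m then (0:ℝ) else 1)
          * ∏ j : Fin n, (if n ≤ j.1 then bscP β (f j m (prefixOf z j)) (z j) else 1)
      else 0)
      = if z = y then (if g z = m then (0:ℝ) else 1) else 0 := by
    intro z
    rw [if_congr (h1 z) rfl rfl]
    by_cases h : z = y
    · rw [if_pos h, if_pos h, Finset.prod_congr rfl
        (fun (j : Fin n) _ => if_neg (by omega)), Finset.prod_const_one, mul_one]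
    · rw [if_neg h, if_neg h]
  rw [Finset.sum_congr rfl fun z _ => h2 z, Finset.sum_ite_eq' Finset.univ y
    (fun z => if g z = m then (0:ℝ) else 1), if_pos (Finset.mem_univ y)]

lemma Vfun_bot (β : ℝ) {n L : ℕ} (f : (i : Fin n) → Fin L → (Fin i.1 → Fin 2) → Fin 2)
    (g : (Fin n → Fin 2) → Fin L) (m : Fin L) (y : Fin n → Fin 2) :
    Vfun β f g m 0 y
      = ∑ z : Fin n → Fin 2, (if g z = m then (0:ℝ) else 1)
          * ∏ j : Fin n, bscP β (f j m (prefixOf z j)) (z j) := by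
  unfold Vfun
  refine Finset.sum_congr rfl fun z _ => ?_
  rw [if_pos (fun j hj => absurd hj (by omega))]
  congr 1

lemma Vfun_step (β : ℝ) {n L : ℕ} (f : (i : Fin n) → Fin L → (Fin i.1 → Fin 2) → Fin 2)
    (g : (Fin n → Fin 2) → Fin L) (m : Fin L) (i : Fin n) (y : Fin n → Fin 2) :
    Vfun β f g m i.1 y
      = ∑ b : Fin 2, bscP β (f i m (prefixOf y i)) b
          * Vfun β f g m (i.1+1) (Function.update y i b) := by
  have key : ∀ z : Fin n → Fin 2,
      (∑ b : Fin 2, bscP β (f i m (prefixOf y i)) b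
        * (if ∀ j : Fin n, j.1 < i.1+1 → z j = Function.update y i b j then
            (if g z = m then (0:ℝ) else 1)
              * ∏ j : Fin n, (if i.1+1 ≤ j.1 then bscP β (f j m (prefixOf z j)) (z j) else 1)
          else 0))
      = if ∀ j : Fin n, j.1 < i.1 → z j = y j then
          (if g z = m then (0:ℝ) else 1)
            * ∏ j : Fin n, (if i.1 ≤ j.1 then bscP β (f j m (prefixOf z j)) (z j) else 1)
        else 0 := by
    intro z
    have hcond : ∀ b : Fin 2,
        (∀ j : Fin n, j.1 < i.1+1 → z j = Function.update y i b j)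
          ↔ ((∀ j : Fin n, j.1 < i.1 → z j = y j) ∧ z i = b) := by
      intro b
      constructor
      · intro h
        constructor
        · intro j hj
          rw [h j (by omega), Function.update_of_ne (by intro hh; subst hh; omega)]
        · rw [h i (by omega), Function.update_self]
      · rintro ⟨h1, h2⟩ j hj
        by_cases hji : j = i
        · subst hji; rw [h2, Function.update_self]
        · have : j.1 < i.1 := by
            rcases lt_or_eq_of_le (Nat.lt_succ_iff.mp hj) with h | h
            · exact h
            · exact absurd (Fin.ext h) hji
          rw [h1 j this, Function.update_of_ne hji]
    by_cases hC : ∀ j : Fin n, j.1 < i.1 → z j = y j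
    · have hpre : prefixOf z i = prefixOf y i := prefixOf_congr z y i hC
      have hprod : (∏ j : Fin n, (if i.1 ≤ j.1 then bscP β (f j m (prefixOf z j)) (z j) else 1))
          = bscP β (f i m (prefixOf y i)) (z i)
            * ∏ j : Fin n, (if i.1+1 ≤ j.1 then bscP β (f j m (prefixOf z j)) (z j) else 1) := by
        have hfac : ∀ j : Fin n,
            (if i.1 ≤ j.1 then bscP β (f j m (prefixOf z j)) (z j) else 1)
              = (if j = i then bscP β (f j m (prefixOf z j)) (z j) else 1)
                * (if i.1+1 ≤ j.1 then bscP β (f j m (prefixOf z j)) (z j) else 1) := by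
          intro j
          rcases lt_trichotomy j.1 i.1 with h | h | h
          · rw [if_neg (by omega), if_neg (by intro hh; subst hh; omega), if_neg (by omega),
              mul_one]
          · have : j = i := Fin.ext h
            subst this
            rw [if_pos (by omega), if_pos rfl, if_neg (by omega), mul_one]
          · rw [if_pos (by omega), if_neg (by intro hh; subst hh; omega), if_pos (by omega),
              one_mul]
        rw [Finset.prod_congr rfl fun j _ => hfac j, Finset.prod_mul_distrib,
          Finset.prod_ite_eq' Finset.univ i (fun j => bscP β (f j m (prefixOf z j)) (z j)),
          if_pos (Finset.mem_univ i), hpre]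
      rw [if_pos hC, hprod]
      have hb : ∀ b : Fin 2,
          bscP β (f i m (prefixOf y i)) b
            * (if ∀ j : Fin n, j.1 < i.1+1 → z j = Function.update y i b j then
                (if g z = m then (0:ℝ) else 1)
                  * ∏ j : Fin n, (if i.1+1 ≤ j.1 then bscP β (f j m (prefixOf z j)) (z j) else 1)
              else 0)
          = if z i = b then
              bscP β (f i m (prefixOf y i)) b * ((if g z = m then (0:ℝ) else 1)
                * ∏ j : Fin n, (if i.1+1 ≤ j.1 then bscP β (f j m (prefixOf z j)) (z j) else 1))
            else 0 := by
        intro b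
        rw [if_congr (hcond b) rfl rfl]
        by_cases h : z i = b
        · rw [if_pos ⟨hC, h⟩, if_pos h]
        · rw [if_neg (by tauto), if_neg h, mul_zero]
      rw [Finset.sum_congr rfl fun b _ => hb b, Fin.sum_univ_two]
      rcases fin2_cases (z i) with h | h <;> rw [h] <;> simp <;> ring
    · rw [if_neg hC]
      have : ∀ b : Fin 2, ¬ (∀ j : Fin n, j.1 < i.1+1 → z j = Function.update y i b j) := by
        intro b hcon
        exact hC ((hcond b).mp hcon).1
      rw [Finset.sum_congr rfl fun b _ => by rw [if_neg (this b), mul_zero]]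
      simp
  unfold Vfun
  have : ∀ b : Fin 2, bscP β (f i m (prefixOf y i)) b
      * (∑ z : Fin n → Fin 2, if ∀ j : Fin n, j.1 < i.1+1 → z j = Function.update y i b j then
            (if g z = m then (0:ℝ) else 1)
              * ∏ j : Fin n, (if i.1+1 ≤ j.1 then bscP β (f j m (prefixOf z j)) (z j) else 1)
          else 0)
      = ∑ z : Fin n → Fin 2, bscP β (f i m (prefixOf y i)) b
          * (if ∀ j : Fin n, j.1 < i.1+1 → z j = Function.update y i b j then
            (if g z = m then (0:ℝ) else 1)
              * ∏ j : Fin n, (if i.1+1 ≤ j.1 then bscP β (f j m (prefixOf z j)) (z j) else 1)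
          else 0) := fun b => Finset.mul_sum _ _ _
  rw [Finset.sum_congr rfl fun b _ => this b, Finset.sum_comm]
  exact (Finset.sum_congr rfl fun z _ => key z).symm

/-- Extend a prefix to a full sequence by padding with `0`. -/
def extendPre {n : ℕ} (i : Fin n) (pre : Fin i.1 → Fin 2) : Fin n → Fin 2 :=
  fun j => if h : j.1 < i.1 then pre ⟨j.1, h⟩ else 0

lemma prefixOf_extendPre {n : ℕ} (i : Fin n) (pre : Fin i.1 → Fin 2) :
    prefixOf (extendPre i pre) i = pre := by
  funext j
  simp only [prefixOf, extendPre]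
  rw [dif_pos j.2]

end Aux

/-- Proposition: a feedback coding scheme for `BSC(β)` with blocklength `n`, message
cardinality `L` and maximum error probability `ε` exists if and only if the channel coding
game `(W, n, L, ε)` is a guaranteed win, where `W : {0} → DCCone({0,1})` has
`W(0) = {a : (1-β)a(0) + βa(1) ≤ 0 or βa(0) + (1-β)a(1) ≤ 0}`. -/
theorem bsc_feedback_scheme_iff_game {β : ℝ} (hβ0 : 0 < β) (hβ1 : β < 1 / 2)
    (n L : ℕ) (hn : 0 < n) (hL : 0 < L) (ε : ℝ) (hε0 : 0 < ε) (hε1 : ε < 1) :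
    (∃ (f : (i : Fin n) → Fin L → (Fin i.1 → Fin 2) → Fin 2)
       (g : (Fin n → Fin 2) → Fin L),
       ∀ m : Fin L,
         ∑ y : Fin n → Fin 2,
           (if g y = m then 0 else
             ∏ i, (if y i = f i m (prefixOf y i) then 1 - β else β)) ≤ ε)
    ↔ GuaranteedWin
        (fun _ : Fin 1 =>
          {a : Fin 2 → ℝ | (1 - β) * a 0 + β * a 1 ≤ 0 ∨ β * a 0 + (1 - β) * a 1 ≤ 0})
        n L ε := by
  constructor
  · -- a feedback code yields a guaranteed win
    rintro ⟨f, g, hcode⟩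
    refine ⟨fun _ _ => 0,
      fun i m pre => fun b =>
        Vfun β f g m (i.1+1) (Function.update (extendPre i pre) i b)
          - Vfun β f g m i.1 (extendPre i pre),
      g, ?_, ?_⟩
    · -- the bets belong to the cone
      intro i m pre
      have hstep := Vfun_step β f g m i (extendPre i pre)
      rw [prefixOf_extendPre, Fin.sum_univ_two] at hstep
      simp only [Set.mem_setOf_eq]
      rcases fin2_cases (f i m pre) with h | h
      · left
        rw [h, bscP_00, bscP_01] at hstep
        nlinarith [hstep]
      · right
        rw [h, bscP_10, bscP_11] at hstep
        nlinarith [hstep]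
    · -- the payoff guarantee
      intro m y
      have hterm : ∀ i : Fin n,
          Vfun β f g m (i.1+1) (Function.update (extendPre i (prefixOf y i)) i (y i))
            - Vfun β f g m i.1 (extendPre i (prefixOf y i))
          = Vfun β f g m (i.1+1) y - Vfun β f g m i.1 y := by
        intro i
        have e1 : Vfun β f g m i.1 (extendPre i (prefixOf y i)) = Vfun β f g m i.1 y := by
          refine Vfun_congr β f g m i.1 _ y fun j hj => ?_
          simp only [extendPre]
          rw [dif_pos hj]
          exact congrArg y (Fin.ext rfl)
        have e2 : Vfun β f g m (i.1+1)
            (Function.update (extendPre i (prefixOf y i)) i (y i)) = Vfun β f g m (i.1+1) y := by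
          refine Vfun_congr β f g m (i.1+1) _ y fun j hj => ?_
          by_cases hji : j = i
          · subst hji; rw [Function.update_self]
          · have hj' : j.1 < i.1 := by
              rcases lt_or_eq_of_le (Nat.lt_succ_iff.mp hj) with h | h
              · exact h
              · exact absurd (Fin.ext h) hji
            rw [Function.update_of_ne hji]
            simp only [extendPre]
            rw [dif_pos hj']
            exact congrArg y (Fin.ext rfl)
        rw [e1, e2]
      have htele : ∑ i : Fin n,
          (Vfun β f g m (i.1+1) (Function.update (extendPre i (prefixOf y i)) i (y i))
            - Vfun β f g m i.1 (extendPre i (prefixOf y i)))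
          = Vfun β f g m n y - Vfun β f g m 0 y := by
        rw [Finset.sum_congr rfl fun i _ => hterm i]
        rw [Fin.sum_univ_eq_sum_range (fun k => Vfun β f g m (k+1) y - Vfun β f g m k y) n]
        exact Finset.sum_range_sub (fun k => Vfun β f g m k y) n
      have hbot : Vfun β f g m 0 y ≤ ε := by
        rw [Vfun_bot]
        have hcm := hcode m
        have heq : ∀ z : Fin n → Fin 2,
            (if g z = m then (0:ℝ) else
              ∏ i, (if z i = f i m (prefixOf z i) then 1 - β else β))
            = (if g z = m then (0:ℝ) else 1)
                * ∏ j : Fin n, bscP β (f j m (prefixOf z j)) (z j) := by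
          intro z
          by_cases h : g z = m
          · rw [if_pos h, if_pos h, zero_mul]
          · rw [if_neg h, if_neg h, one_mul]
            rfl
        rw [Finset.sum_congr rfl fun z _ => heq z] at hcm
        exact hcm
      show (∑ i : Fin n, _) - _ ≥ -ε
      rw [htele, Vfun_top]
      by_cases h : g y = m
      · rw [if_pos h]; linarith
      · rw [if_neg h]; linarith
  · -- a guaranteed win yields a feedback code
    rintro ⟨x, w, dec, hmem, hwin⟩
    refine ⟨fun i m pre =>
      if (1 - β) * w i m pre 0 + β * w i m pre 1 ≤ 0 then 0 else 1, dec, ?_⟩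
    intro m
    set f : (i : Fin n) → Fin L → (Fin i.1 → Fin 2) → Fin 2 := fun i m pre =>
      if (1 - β) * w i m pre 0 + β * w i m pre 1 ≤ 0 then 0 else 1 with hf
    set c : (j : Fin n) → (Fin j.1 → Fin 2) → Fin 2 → ℝ :=
      fun j pre b => bscP β (f j m pre) b with hcdef
    have hc0 : ∀ (j : Fin n) (pre : Fin j.1 → Fin 2) (b : Fin 2), 0 ≤ c j pre b :=
      fun j pre b => bscP_nonneg (le_of_lt hβ0) (by linarith) _ _
    have hc1 : ∀ (j : Fin n) (pre : Fin j.1 → Fin 2), c j pre 0 + c j pre 1 = 1 :=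
      fun j pre => bscP_sum β _
    have hkey : ∀ (i : Fin n) (pre : Fin i.1 → Fin 2),
        c i pre 0 * w i m pre 0 + c i pre 1 * w i m pre 1 ≤ 0 := by
      intro i pre
      by_cases h : (1 - β) * w i m pre 0 + β * w i m pre 1 ≤ 0
      · have hfi : f i m pre = 0 := if_pos h
        simp only [hcdef, hfi, bscP_00, bscP_01]
        exact h
      · have hfi : f i m pre = 1 := if_neg h
        have hm := hmem i m pre
        simp only [Set.mem_setOf_eq] at hm
        rcases hm with hm | hm
        · exact absurd hm h
        · simp only [hcdef, hfi, bscP_10, bscP_11]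
          exact hm
    have h1 : ∑ y : Fin n → Fin 2, ∏ j : Fin n, c j (prefixOf y j) (y j) = 1 :=
      sum_prod_eq_one c hc1
    have h2 : ∀ i : Fin n,
        ∑ y : Fin n → Fin 2,
          (∏ j : Fin n, c j (prefixOf y j) (y j)) * w i m (prefixOf y i) (y i) ≤ 0 :=
      fun i => sum_prod_weighted_nonpos c i (w i m) hc0 hc1 (fun pre => hkey i pre)
    have hre : ∀ y : Fin n → Fin 2,
        (if dec y = m then (0:ℝ) else
          ∏ i, (if y i = f i m (prefixOf y i) then 1 - β else β))
        = (if dec y = m then (0:ℝ) else 1) * ∏ j : Fin n, c j (prefixOf y j) (y j) := by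
      intro y
      by_cases h : dec y = m
      · rw [if_pos h, if_pos h, zero_mul]
      · rw [if_neg h, if_neg h, one_mul]
        rfl
    calc ∑ y : Fin n → Fin 2,
        (if dec y = m then (0:ℝ) else
          ∏ i, (if y i = f i m (prefixOf y i) then 1 - β else β))
        = ∑ y : Fin n → Fin 2,
            (if dec y = m then (0:ℝ) else 1) * ∏ j : Fin n, c j (prefixOf y j) (y j) :=
          Finset.sum_congr rfl fun y _ => hre y
      _ ≤ ∑ y : Fin n → Fin 2,
            ((∑ i : Fin n, w i m (prefixOf y i) (y i)) + ε)
              * ∏ j : Fin n, c j (prefixOf y j) (y j) := by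
          refine Finset.sum_le_sum fun y _ => ?_
          refine mul_le_mul_of_nonneg_right ?_
            (Finset.prod_nonneg fun j _ => hc0 j _ _)
          have := hwin m y
          by_cases h : dec y = m
          · rw [if_pos h]
            rw [if_pos h] at this
            linarith
          · rw [if_neg h]
            rw [if_neg h] at this
            linarith
      _ = (∑ i : Fin n, ∑ y : Fin n → Fin 2,
            (∏ j : Fin n, c j (prefixOf y j) (y j)) * w i m (prefixOf y i) (y i))
          + ε * ∑ y : Fin n → Fin 2, ∏ j : Fin n, c j (prefixOf y j) (y j) := by
          have point : ∀ y : Fin n → Fin 2,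
              ((∑ i : Fin n, w i m (prefixOf y i) (y i)) + ε)
                * ∏ j : Fin n, c j (prefixOf y j) (y j)
              = (∑ i : Fin n, (∏ j : Fin n, c j (prefixOf y j) (y j))
                  * w i m (prefixOf y i) (y i))
                + ε * ∏ j : Fin n, c j (prefixOf y j) (y j) := by
            intro y
            rw [add_mul, Finset.sum_mul]
            congr 1
            exact Finset.sum_congr rfl fun i _ => mul_comm _ _
          rw [Finset.sum_congr rfl fun y _ => point y, Finset.sum_add_distrib]
          congr 1
          · exact Finset.sum_comm
          · rw [← Finset.mul_sum]
      _ ≤ 0 + ε * 1 := by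
          refine add_le_add ?_ ?_
          · exact Finset.sum_nonpos fun i _ => h2 i
          · rw [h1]
      _ = ε := by ring

end
end

section
/- Let X and Y be finite sets and E ⊆ X × Y. Define W_ad : X → DCCone(Y) by W_ad(x) := {a ∈ ℝ^Y : a(y) ≤ 0 for every y ∈ Y with (x,y) ∈ E} (so W_ad(x) = ℝ^Y if no such y exists). Then for all positive integers n, L and every 0 < ε < 1, the channel coding game (W_ad, n, L, ε) is a guaranteed win if and only if there exists a zero-error coding scheme for E with blocklength n and message cardinality L: functions f_n : [L] → Xⁿ and g_n : Yⁿ → [L] such that for every m ∈ [L] and every yⁿ ∈ Yⁿ with (f_n(m)_i, y_i) ∈ E for all i ∈ [n], one has g_n(yⁿ) = m. -/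
open scoped BigOperators

noncomputable section

/-- The channel coding game for the adversarial channel `W_ad(x) = {a : a(y) ≤ 0 whenever
(x,y) ∈ E}` is a guaranteed win iff a zero-error coding scheme for `E` exists. -/
theorem adversarial_game_iff_zero_error {X Y : Type*} [Fintype X] [Fintype Y]
    (E : Set (X × Y)) (n L : ℕ) (hn : 0 < n) (hL : 0 < L)
    (ε : ℝ) (hε0 : 0 < ε) (hε1 : ε < 1) :
    GuaranteedWin (fun x => {a : Y → ℝ | ∀ y, (x, y) ∈ E → a y ≤ 0}) n L ε
    ↔ ∃ (f : Fin L → Fin n → X) (g : (Fin n → Y) → Fin L),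
        ∀ (m : Fin L) (y : Fin n → Y), (∀ i, (f m i, y i) ∈ E) → g y = m := by
  classical
  constructor
  · rintro ⟨x, w, dec, hW, hwin⟩
    refine ⟨x, dec, fun m y hy => ?_⟩
    by_contra hne
    have h := hwin m y
    rw [if_neg hne] at h
    have hsum : (∑ i, w i m (prefixOf y i) (y i)) ≤ 0 := by
      apply Finset.sum_nonpos
      intro i _
      exact hW i m (prefixOf y i) (y i) (hy i)
    linarith
  · rintro ⟨f, g, hfg⟩
    refine ⟨f, fun i m _ => fun y => if (f m i, y) ∈ E then 0 else 1, g, ?_, ?_⟩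
    · intro i m ypre y hy
      simp [hy]
    · intro m y
      have hnn : ∀ i ∈ Finset.univ,
          (0 : ℝ) ≤ if (f m (i : Fin n), y i) ∈ E then 0 else 1 := by
        intro i _
        split <;> norm_num
      by_cases hall : ∀ i, (f m i, y i) ∈ E
      · rw [hfg m y hall, if_pos rfl]
        have := Finset.sum_nonneg hnn
        simpa using by linarith
      · push_neg at hall
        obtain ⟨i0, hi0⟩ := hall
        have h1 : (1 : ℝ) ≤ ∑ i, if (f m i, y i) ∈ E then (0 : ℝ) else 1 := by
          have := Finset.single_le_sum hnn (Finset.mem_univ i0)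
          rw [if_neg hi0] at this
          exact this
        have h2 : (if g y = m then (0 : ℝ) else 1) ≤ 1 := by
          split <;> norm_num
        simp only [ge_iff_le]
        linarith

end
end

section
/- Let X and Y be finite sets and E ⊆ X × Y. Define W_adfb : {0} → DCCone(Y) by W_adfb(0) := ⋃_{x∈X} {a ∈ ℝ^Y : a(y) ≤ 0 for every y ∈ Y with (x,y) ∈ E}. Then for all positive integers n, L and every 0 < ε < 1, the channel coding game (W_adfb, n, L, ε) is a guaranteed win if and only if there exists a zero-error feedback coding scheme for E with blocklength n and message cardinality L: functions f_{n,i} : [L] × Y^{i−1} → X for i ∈ [n] and g_n : Yⁿ → [L] such that for every m ∈ [L] and every yⁿ ∈ Yⁿ with (f_{n,i}(m, y^{i−1}), y_i) ∈ E for all i ∈ [n], one has g_n(yⁿ) = m. -/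
open scoped BigOperators

noncomputable section

/-- The channel coding game for the adversarial channel with feedback,
`W_adfb(0) = ⋃_{x∈X} {a : a(y) ≤ 0 whenever (x,y) ∈ E}`, is a guaranteed win iff a
zero-error feedback coding scheme for `E` exists. -/
theorem adversarial_feedback_game_iff_zero_error {X Y : Type*} [Fintype X] [Fintype Y]
    (E : Set (X × Y)) (n L : ℕ) (hn : 0 < n) (hL : 0 < L)
    (ε : ℝ) (hε0 : 0 < ε) (hε1 : ε < 1) :
    GuaranteedWin
      (fun _ : Fin 1 => ⋃ x : X, {a : Y → ℝ | ∀ y, (x, y) ∈ E → a y ≤ 0}) n L ε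
    ↔ ∃ (f : (i : Fin n) → Fin L → (Fin i.1 → Y) → X) (g : (Fin n → Y) → Fin L),
        ∀ (m : Fin L) (y : Fin n → Y),
          (∀ i, (f i m (prefixOf y i), y i) ∈ E) → g y = m := by
  classical
  constructor
  · rintro ⟨x, w, dec, hw, hsum⟩
    choose f hf using fun (i : Fin n) (m : Fin L) (ypre : Fin i.1 → Y) =>
      Set.mem_iUnion.mp (hw i m ypre)
    refine ⟨f, dec, fun m y hy => ?_⟩
    by_contra hne
    have hle : (∑ i, w i m (prefixOf y i) (y i)) ≤ 0 :=
      Finset.sum_nonpos fun i _ => hf i m (prefixOf y i) (y i) (hy i)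
    have := hsum m y
    rw [if_neg hne] at this
    linarith
  · rintro ⟨f, g, hfg⟩
    refine ⟨fun _ _ => 0,
      fun i m ypre => fun y' => if (f i m ypre, y') ∈ E then 0 else 1, g, ?_, ?_⟩
    · intro i m ypre
      exact Set.mem_iUnion.mpr ⟨f i m ypre, fun y hy => by simp [hy]⟩
    · intro m y
      by_cases hdec : g y = m
      · rw [if_pos hdec]
        have : (0:ℝ) ≤ ∑ i, (if (f i m (prefixOf y i), y i) ∈ E then (0:ℝ) else 1) :=
          Finset.sum_nonneg fun i _ => by positivity
        linarith
      · rw [if_neg hdec]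
        have hex : ∃ i, (f i m (prefixOf y i), y i) ∉ E := by
          by_contra h
          push_neg at h
          exact hdec (hfg m y h)
        obtain ⟨i0, hi0⟩ := hex
        have h1 : (1:ℝ) ≤ ∑ i, (if (f i m (prefixOf y i), y i) ∈ E then (0:ℝ) else 1) := by
          have := Finset.single_le_sum
            (f := fun i : Fin n => (if (f i m (prefixOf y i), y i) ∈ E then (0:ℝ) else 1))
            (fun i _ => by positivity) (Finset.mem_univ i0)
          simpa only [if_neg hi0] using this
        linarith
end
end

section
/- Let X and Y be finite sets and p_{Y|X} a conditional probability distribution from X to Y. Define W_dmc : X → DCCone(Y) by W_dmc(x) := {a ∈ ℝ^Y : Σ_{y∈Y} p_{Y|X}(y|x) a(y) ≤ 0}. Then for all positive integers n, L and every 0 < ε < 1, the channel coding game (W_dmc, n, L, ε) is a guaranteed win if and only if there exists a coding scheme for the discrete memoryless channel p_{Y|X} with blocklength n, message cardinality L and maximum error probability ε. -/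
open scoped BigOperators

noncomputable section

namespace DCAux

open Finset

section V

variable {Y : Type*} [Fintype Y] [DecidableEq Y]

/-- The conditional expected value of `err` given the first `k` coordinates (taken from `z`),
with later coordinates distributed according to `q`. -/
def Vfun {n : ℕ} (q : Fin n → Y → ℝ) (err : (Fin n → Y) → ℝ) (k : ℕ) (z : Fin n → Y) : ℝ :=
  ∑ y : Fin n → Y,
    (∏ j, if j.1 < k then (if y j = z j then (1:ℝ) else 0) else q j (y j)) * err y

lemma Vfun_loc {n : ℕ} (q : Fin n → Y → ℝ) (err : (Fin n → Y) → ℝ) (k : ℕ)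
    {z z' : Fin n → Y} (h : ∀ j : Fin n, j.1 < k → z j = z' j) :
    Vfun q err k z = Vfun q err k z' := by
  unfold Vfun
  refine Finset.sum_congr rfl fun y _ => ?_
  congr 1
  refine Finset.prod_congr rfl fun j _ => ?_
  by_cases hj : j.1 < k
  · simp [hj, h j hj]
  · simp [hj]

lemma Vfun_zero {n : ℕ} (q : Fin n → Y → ℝ) (err : (Fin n → Y) → ℝ) (z : Fin n → Y) :
    Vfun q err 0 z = ∑ y : Fin n → Y, (∏ j, q j (y j)) * err y := by
  unfold Vfun; simp

lemma Vfun_top {n : ℕ} (q : Fin n → Y → ℝ) (err : (Fin n → Y) → ℝ) (z : Fin n → Y) :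
    Vfun q err n z = err z := by
  unfold Vfun
  have h1 : ∀ y : Fin n → Y,
      (∏ j : Fin n, if j.1 < n then (if y j = z j then (1:ℝ) else 0) else q j (y j))
        = if y = z then (1:ℝ) else 0 := by
    intro y
    have : ∀ j : Fin n, (if j.1 < n then (if y j = z j then (1:ℝ) else 0) else q j (y j))
        = if y j = z j then (1:ℝ) else 0 := fun j => by simp [j.2]
    simp only [this]
    rw [Fintype.prod_boole]
    congr 1
    simp [funext_iff]
  simp only [h1, ite_mul, one_mul, zero_mul]
  simp

lemma Vfun_tower {n : ℕ} (q : Fin n → Y → ℝ) (err : (Fin n → Y) → ℝ) (k : ℕ)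
    (hk : k < n) (z : Fin n → Y) :
    ∑ u : Y, q ⟨k, hk⟩ u * Vfun q err (k + 1) (Function.update z ⟨k, hk⟩ u)
      = Vfun q err k z := by
  unfold Vfun
  simp only [Finset.mul_sum]
  rw [Finset.sum_comm]
  refine Finset.sum_congr rfl fun y _ => ?_
  set kf : Fin n := ⟨k, hk⟩ with hkf
  set B : ℝ := ∏ j ∈ univ.erase kf,
      if j.1 < k then (if y j = z j then (1:ℝ) else 0) else q j (y j) with hB
  have hprod : ∀ u : Y,
      (∏ j : Fin n, if j.1 < k+1 then (if y j = Function.update z kf u j then (1:ℝ) else 0)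
        else q j (y j))
      = (if y kf = u then (1:ℝ) else 0) * B := by
    intro u
    rw [← Finset.mul_prod_erase univ _ (mem_univ kf)]
    congr 1
    · simp [kf, Nat.lt_succ_self]
    · refine Finset.prod_congr rfl fun j hj => ?_
      have hjk : j ≠ kf := (Finset.mem_erase.mp hj).1
      rw [Function.update_of_ne hjk]
      by_cases h2 : j.1 < k
      · simp [h2, Nat.lt_succ_of_lt h2]
      · have h3 : ¬ j.1 < k + 1 := by
          intro hcon
          exact hjk (Fin.ext (Nat.eq_of_lt_succ_of_not_lt hcon h2))
        simp [h2, h3]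
  simp only [hprod]
  have hterm : ∀ u : Y, q kf u * ((if y kf = u then (1:ℝ) else 0) * B * err y)
      = if y kf = u then q kf u * (B * err y) else 0 := by
    intro u; by_cases h : y kf = u <;> simp [h]
  simp only [hterm]
  rw [Finset.sum_ite_eq]
  rw [← Finset.mul_prod_erase univ _ (mem_univ kf), ← hB]
  simp [kf]
  ring

end V

section B

variable {Y : Type*} [Fintype Y]

lemma prefixOf_cons {n : ℕ} (y0 : Y) (r : Fin n → Y) (j : Fin n) :
    prefixOf (Fin.cons y0 r) (Fin.succ j) = Fin.cons y0 (prefixOf r j) := by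
  funext k
  rcases k with ⟨kv, hk⟩
  cases kv with
  | zero => rfl
  | succ kv => rfl

lemma sum_pi_cons {n : ℕ} (G : (Fin (n+1) → Y) → ℝ) :
    ∑ y : Fin (n+1) → Y, G y = ∑ y0 : Y, ∑ r : Fin n → Y, G (Fin.cons y0 r) := by
  rw [← Equiv.sum_comp (Fin.consEquiv fun _ => Y) G, Fintype.sum_prod_type]
  rfl

lemma sum_prod_pi_eq_one {n : ℕ} (q : Fin n → Y → ℝ) (hq1 : ∀ j, ∑ u, q j u = 1) :
    ∑ y : Fin n → Y, ∏ j, q j (y j) = 1 := by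
  classical
  rw [← Fintype.prod_sum q]
  simp [hq1]

lemma sum_prefix_nonpos : ∀ (n : ℕ) (q : Fin n → Y → ℝ),
    (∀ j u, 0 ≤ q j u) → (∀ j, ∑ u, q j u = 1) →
    ∀ (i : Fin n) (F : (Fin i.1 → Y) → Y → ℝ),
    (∀ z, ∑ u, q i u * F z u ≤ 0) →
    ∑ y : Fin n → Y, (∏ j, q j (y j)) * F (prefixOf y i) (y i) ≤ 0 := by
  intro n
  induction n with
  | zero => exact fun q _ _ i => absurd i.2 (Nat.not_lt_zero _)
  | succ n ih =>
    intro q hq0 hq1 i F hF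
    rw [sum_pi_cons]
    induction i using Fin.cases with
    | zero =>
      have hpre : ∀ y : Fin (n+1) → Y, prefixOf y (0 : Fin (n+1)) = Fin.elim0 :=
        fun y => funext fun k => k.elim0
      simp only [hpre, Fin.prod_univ_succ, Fin.cons_zero, Fin.cons_succ]
      have hP : ∑ r : Fin n → Y, ∏ j, q j.succ (r j) = 1 :=
        sum_prod_pi_eq_one _ (fun j => hq1 j.succ)
      calc ∑ y0 : Y, ∑ r : Fin n → Y,
            (q 0 y0 * ∏ j, q j.succ (r j)) * F Fin.elim0 y0
          = ∑ y0 : Y, (q 0 y0 * F Fin.elim0 y0) * ∑ r : Fin n → Y, ∏ j, q j.succ (r j) := by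
            refine Finset.sum_congr rfl fun y0 _ => ?_
            rw [Finset.mul_sum]
            exact Finset.sum_congr rfl fun r _ => by ring
        _ = ∑ y0 : Y, q 0 y0 * F Fin.elim0 y0 := by rw [hP]; simp
        _ ≤ 0 := hF _
    | succ j =>
      simp only [prefixOf_cons, Fin.prod_univ_succ, Fin.cons_zero, Fin.cons_succ]
      refine Finset.sum_nonpos fun y0 _ => ?_
      have hinner : ∑ r : Fin n → Y,
            (q 0 y0 * ∏ j', q j'.succ (r j')) * F (Fin.cons y0 (prefixOf r j)) (r j)
          = q 0 y0 * ∑ r : Fin n → Y,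
            (∏ j', q j'.succ (r j')) * F (Fin.cons y0 (prefixOf r j)) (r j) := by
        rw [Finset.mul_sum]
        exact Finset.sum_congr rfl fun r _ => by ring
      rw [hinner]
      have hle : ∑ r : Fin n → Y,
          (∏ j', q j'.succ (r j')) * F (Fin.cons y0 (prefixOf r j)) (r j) ≤ 0 :=
        ih (fun j' => q j'.succ) (fun j' u => hq0 j'.succ u) (fun j' => hq1 j'.succ) j
          (fun z u => F (Fin.cons y0 z) u) (fun z => hF (Fin.cons y0 z))
      have := mul_le_mul_of_nonneg_left hle (hq0 0 y0)
      simpa using this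

end B

end DCAux

open Finset

/-- The channel coding game for the DMC cone `W_dmc(x) = (p_{Y|X}(·|x))°` is a guaranteed
win iff a (non-feedback) coding scheme for the DMC `p_{Y|X}` with blocklength `n`, message
cardinality `L` and maximum error probability `ε` exists. -/
theorem dmc_game_iff_coding_scheme {X Y : Type*} [Fintype X] [Fintype Y]
    (p : X → Y → ℝ) (hp0 : ∀ x y, 0 ≤ p x y) (hp1 : ∀ x, ∑ y, p x y = 1)
    (n L : ℕ) (hn : 0 < n) (hL : 0 < L) (ε : ℝ) (hε0 : 0 < ε) (hε1 : ε < 1) :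
    GuaranteedWin (fun x => {a : Y → ℝ | ∑ y, p x y * a y ≤ 0}) n L ε
    ↔ ∃ (f : Fin L → Fin n → X) (g : (Fin n → Y) → Fin L),
        ∀ m : Fin L,
          ∑ y : Fin n → Y,
            (if g y = m then 0 else ∏ i, p (f m i) (y i)) ≤ ε := by
  classical
  constructor
  · rintro ⟨x, w, dec, hmem, hwin⟩
    refine ⟨x, dec, fun m => ?_⟩
    have key : ∀ i : Fin n,
        ∑ y : Fin n → Y, (∏ j, p (x m j) (y j)) * w i m (prefixOf y i) (y i) ≤ 0 :=
      fun i => DCAux.sum_prefix_nonpos n (fun j => p (x m j)) (fun j u => hp0 _ _)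
        (fun j => hp1 _) i (fun z u => w i m z u) (fun z => hmem i m z)
    calc ∑ y : Fin n → Y, (if dec y = m then (0:ℝ) else ∏ i, p (x m i) (y i))
        = ∑ y : Fin n → Y, (∏ i, p (x m i) (y i)) * (if dec y = m then 0 else 1) := by
          refine Finset.sum_congr rfl fun y _ => ?_
          by_cases h : dec y = m <;> simp [h]
      _ ≤ ∑ y : Fin n → Y, (∏ i, p (x m i) (y i))
            * (ε + ∑ i, w i m (prefixOf y i) (y i)) := by
          refine Finset.sum_le_sum fun y _ => ?_
          refine mul_le_mul_of_nonneg_left ?_ (Finset.prod_nonneg fun j _ => hp0 _ _)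
          have := hwin m y
          by_cases h : dec y = m <;> simp [h] at this ⊢ <;> linarith
      _ = ∑ y : Fin n → Y, ((∏ i, p (x m i) (y i)) * ε)
            + ∑ y : Fin n → Y, ∑ i, (∏ j, p (x m j) (y j)) * w i m (prefixOf y i) (y i) := by
          rw [← Finset.sum_add_distrib]
          refine Finset.sum_congr rfl fun y _ => ?_
          rw [mul_add, Finset.mul_sum]
      _ ≤ ε := by
          rw [← Finset.sum_mul, DCAux.sum_prod_pi_eq_one _ (fun j => hp1 _), one_mul,
            Finset.sum_comm]
          have h0 : ∑ i : Fin n, ∑ y : Fin n → Y,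
              (∏ j, p (x m j) (y j)) * w i m (prefixOf y i) (y i) ≤ 0 :=
            Finset.sum_nonpos fun i _ => key i
          linarith
  · rintro ⟨f, g, hfg⟩
    refine ⟨f, fun i m ypre u =>
        DCAux.Vfun (fun j => p (f m j)) (fun y' => if g y' = m then (0:ℝ) else 1) (i.1+1)
          (fun j => if h : j.1 < i.1 then ypre ⟨j.1, h⟩ else u)
      - DCAux.Vfun (fun j => p (f m j)) (fun y' => if g y' = m then (0:ℝ) else 1) i.1
          (fun j => if h : j.1 < i.1 then ypre ⟨j.1, h⟩ else u), g, ?_, ?_⟩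
    · intro i m ypre
      show ∑ u : Y, p (f m i) u *
          (DCAux.Vfun (fun j => p (f m j)) (fun y' => if g y' = m then (0:ℝ) else 1) (i.1+1)
            (fun j => if h : j.1 < i.1 then ypre ⟨j.1, h⟩ else u)
          - DCAux.Vfun (fun j => p (f m j)) (fun y' => if g y' = m then (0:ℝ) else 1) i.1
            (fun j => if h : j.1 < i.1 then ypre ⟨j.1, h⟩ else u)) ≤ 0
      rcases isEmpty_or_nonempty Y with hY | hY
      · simp
      obtain ⟨u₀⟩ := hY
      set q : Fin n → Y → ℝ := fun j => p (f m j) with hq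
      set E : (Fin n → Y) → ℝ := fun y' => if g y' = m then (0:ℝ) else 1 with hE
      set c : Fin n → Y := fun j => if h : j.1 < i.1 then ypre ⟨j.1, h⟩ else u₀ with hc
      have hA : ∀ u : Y,
          DCAux.Vfun q E (i.1+1) (fun j => if h : j.1 < i.1 then ypre ⟨j.1, h⟩ else u)
          = DCAux.Vfun q E (i.1+1) (Function.update c i u) := by
        intro u
        refine DCAux.Vfun_loc q E (i.1+1) fun j hj => ?_
        by_cases h : j.1 < i.1
        · have hne : j ≠ i := fun hcon => absurd (congrArg Fin.val hcon) (Nat.ne_of_lt h)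
          rw [Function.update_of_ne hne]
          simp only [hc]
          rw [dif_pos h, dif_pos h]
        · have hji : j = i := Fin.ext (Nat.eq_of_lt_succ_of_not_lt hj h)
          subst hji
          rw [Function.update_self]
          simp [h]
      have hB : ∀ u : Y,
          DCAux.Vfun q E i.1 (fun j => if h : j.1 < i.1 then ypre ⟨j.1, h⟩ else u)
          = DCAux.Vfun q E i.1 c := by
        intro u
        refine DCAux.Vfun_loc q E i.1 fun j hj => ?_
        simp only [hc]
        rw [dif_pos hj, dif_pos hj]
      have tower := DCAux.Vfun_tower q E i.1 i.2 c
      simp only [Fin.eta] at tower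
      calc ∑ u : Y, p (f m i) u *
            (DCAux.Vfun q E (i.1+1) (fun j => if h : j.1 < i.1 then ypre ⟨j.1, h⟩ else u)
            - DCAux.Vfun q E i.1 (fun j => if h : j.1 < i.1 then ypre ⟨j.1, h⟩ else u))
          = ∑ u : Y, (q i u * DCAux.Vfun q E (i.1+1) (Function.update c i u)
              - q i u * DCAux.Vfun q E i.1 c) := by
            refine Finset.sum_congr rfl fun u _ => ?_
            rw [hA u, hB u, hq]
            ring
        _ = DCAux.Vfun q E i.1 c - (∑ u, q i u) * DCAux.Vfun q E i.1 c := by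
            rw [Finset.sum_sub_distrib, ← Finset.sum_mul, tower]
        _ ≤ 0 := by
            rw [hq]
            rw [hp1 (f m i)]
            simp
    · intro m y
      have hw : ∀ i : Fin n,
          DCAux.Vfun (fun j => p (f m j)) (fun y' => if g y' = m then (0:ℝ) else 1) (i.1+1)
            (fun j => if h : j.1 < i.1 then prefixOf y i ⟨j.1, h⟩ else y i)
          - DCAux.Vfun (fun j => p (f m j)) (fun y' => if g y' = m then (0:ℝ) else 1) i.1
            (fun j => if h : j.1 < i.1 then prefixOf y i ⟨j.1, h⟩ else y i)
          = DCAux.Vfun (fun j => p (f m j)) (fun y' => if g y' = m then (0:ℝ) else 1) (i.1+1) y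
          - DCAux.Vfun (fun j => p (f m j)) (fun y' => if g y' = m then (0:ℝ) else 1) i.1 y := by
        intro i
        have h1 : DCAux.Vfun (fun j => p (f m j)) (fun y' => if g y' = m then (0:ℝ) else 1)
            (i.1+1) (fun j => if h : j.1 < i.1 then prefixOf y i ⟨j.1, h⟩ else y i)
            = DCAux.Vfun (fun j => p (f m j)) (fun y' => if g y' = m then (0:ℝ) else 1)
            (i.1+1) y := by
          refine DCAux.Vfun_loc _ _ _ fun j hj => ?_
          by_cases h : j.1 < i.1
          · simp [prefixOf, h]
          · have hji : j = i := Fin.ext (Nat.eq_of_lt_succ_of_not_lt hj h)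
            subst hji
            simp [h]
        have h2 : DCAux.Vfun (fun j => p (f m j)) (fun y' => if g y' = m then (0:ℝ) else 1)
            i.1 (fun j => if h : j.1 < i.1 then prefixOf y i ⟨j.1, h⟩ else y i)
            = DCAux.Vfun (fun j => p (f m j)) (fun y' => if g y' = m then (0:ℝ) else 1)
            i.1 y := by
          refine DCAux.Vfun_loc _ _ _ fun j hj => ?_
          simp [prefixOf, hj]
        rw [h1, h2]
      show (∑ i : Fin n,
          (DCAux.Vfun (fun j => p (f m j)) (fun y' => if g y' = m then (0:ℝ) else 1) (i.1+1)
            (fun j => if h : j.1 < i.1 then prefixOf y i ⟨j.1, h⟩ else y i)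
          - DCAux.Vfun (fun j => p (f m j)) (fun y' => if g y' = m then (0:ℝ) else 1) i.1
            (fun j => if h : j.1 < i.1 then prefixOf y i ⟨j.1, h⟩ else y i)))
          - (if g y = m then 0 else 1) ≥ -ε
      rw [Finset.sum_congr rfl fun i _ => hw i]
      have tele : ∑ i : Fin n,
          (DCAux.Vfun (fun j => p (f m j)) (fun y' => if g y' = m then (0:ℝ) else 1) (i.1+1) y
          - DCAux.Vfun (fun j => p (f m j)) (fun y' => if g y' = m then (0:ℝ) else 1) i.1 y)
          = DCAux.Vfun (fun j => p (f m j)) (fun y' => if g y' = m then (0:ℝ) else 1) n y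
          - DCAux.Vfun (fun j => p (f m j)) (fun y' => if g y' = m then (0:ℝ) else 1) 0 y := by
        rw [Fin.sum_univ_eq_sum_range (fun k =>
          DCAux.Vfun (fun j => p (f m j)) (fun y' => if g y' = m then (0:ℝ) else 1) (k+1) y
          - DCAux.Vfun (fun j => p (f m j)) (fun y' => if g y' = m then (0:ℝ) else 1) k y) n]
        exact Finset.sum_range_sub (fun k =>
          DCAux.Vfun (fun j => p (f m j)) (fun y' => if g y' = m then (0:ℝ) else 1) k y) n
      rw [tele, DCAux.Vfun_top, DCAux.Vfun_zero]
      have hV0 : ∑ y' : Fin n → Y, (∏ j, p (f m j) (y' j))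
          * (if g y' = m then (0:ℝ) else 1) ≤ ε := by
        calc ∑ y' : Fin n → Y, (∏ j, p (f m j) (y' j)) * (if g y' = m then (0:ℝ) else 1)
            = ∑ y' : Fin n → Y, (if g y' = m then (0:ℝ) else ∏ j, p (f m j) (y' j)) := by
              refine Finset.sum_congr rfl fun y' _ => ?_
              by_cases h : g y' = m <;> simp [h]
          _ ≤ ε := hfg m
      by_cases h : g y = m <;> simp [h] <;> exact hfg m

end
end

section
/- Let X and Y be finite sets and p_{Y|X} a conditional probability distribution from X to Y. Define W_dmcfb : {0} → DCCone(Y) by W_dmcfb(0) := ⋃_{x∈X} {a ∈ ℝ^Y : Σ_{y∈Y} p_{Y|X}(y|x) a(y) ≤ 0}. Then for all positive integers n, L and every 0 < ε < 1, the channel coding game (W_dmcfb, n, L, ε) is a guaranteed win if and only if there exists a feedback coding scheme for the discrete memoryless channel p_{Y|X} with blocklength n, message cardinality L and maximum error probability ε. -/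
open scoped BigOperators

noncomputable section

/-!
Each bet of a winning strategy has nonpositive mean under the output distribution of the
input it is placed on, so along the channel law of the feedback encoder choosing those
inputs the gambler's capital is a supermartingale; since it dominates the error indicator
up to `ε`, the error probability is at most `ε`. Conversely, the conditional error
probabilities of a feedback code given the outputs so far form a martingale; its increments
are admissible bets, and their sum is the error indicator minus the error probability, hence
at least the indicator minus `ε`.
-/

lemma prefixOf_cons_succ {Y : Type*} {n : ℕ} (c : Y) (y : Fin n → Y) (i : Fin n) :
    prefixOf (Fin.cons c y : Fin (n + 1) → Y) i.succ = Fin.cons c (prefixOf y i) := by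
  funext j
  exact Fin.cases rfl (fun _ => rfl) j

/-- A real function of the round `i`, the outputs `y^{i-1}` seen so far and the current output:
both a feedback channel law and a betting strategy have this shape. -/
abbrev PrefixFun (Y : Type*) (n : ℕ) : Type _ := (i : Fin n) → (Fin i → Y) → Y → ℝ

namespace PrefixFun

variable {Y : Type*} {n : ℕ}

def pathProd (κ : PrefixFun Y n) (y : Fin n → Y) : ℝ :=
  ∏ i, κ i (prefixOf y i) (y i)

def pathSum (w : PrefixFun Y n) (y : Fin n → Y) : ℝ :=
  ∑ i, w i (prefixOf y i) (y i)

def pathExpect [Fintype Y] (κ : PrefixFun Y n) (r : (Fin n → Y) → ℝ) : ℝ :=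
  ∑ y, pathProd κ y * r y

def head (κ : PrefixFun Y (n + 1)) : Y → ℝ :=
  κ 0 fun j => j.elim0

def tail (κ : PrefixFun Y (n + 1)) (c : Y) : PrefixFun Y n :=
  fun i ypre => κ i.succ (Fin.cons c ypre)

def cons (w₀ : Y → ℝ) (w : Y → PrefixFun Y n) : PrefixFun Y (n + 1) :=
  Fin.cases (fun _ => w₀) fun i ypre => w (ypre (0 : Fin (i + 1))) i (Fin.tail ypre)

lemma head_cons (w₀ : Y → ℝ) (w : Y → PrefixFun Y n) : head (cons w₀ w) = w₀ :=
  rfl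

lemma tail_cons (w₀ : Y → ℝ) (w : Y → PrefixFun Y n) (c : Y) : tail (cons w₀ w) c = w c :=
  rfl

lemma apply_zero (κ : PrefixFun Y (n + 1)) (ypre : Fin (0 : Fin (n + 1)) → Y) :
    κ 0 ypre = head κ := by
  rw [head]
  congr 1
  funext j
  exact j.elim0

lemma apply_succ (κ : PrefixFun Y (n + 1)) (i : Fin n) (ypre : Fin i.succ → Y) :
    κ i.succ ypre = tail κ (ypre (0 : Fin (i + 1))) i (Fin.tail ypre) := by
  rw [tail, Fin.cons_self_tail]

lemma pathProd_cons (κ : PrefixFun Y (n + 1)) (c : Y) (y : Fin n → Y) :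
    pathProd κ (Fin.cons c y) = head κ c * pathProd (tail κ c) y := by
  rw [pathProd, Fin.prod_univ_succ, apply_zero κ]
  congr 1
  refine Finset.prod_congr rfl fun i _ => ?_
  rw [prefixOf_cons_succ]
  rfl

lemma pathSum_cons (w : PrefixFun Y (n + 1)) (c : Y) (y : Fin n → Y) :
    pathSum w (Fin.cons c y) = head w c + pathSum (tail w c) y := by
  rw [pathSum, Fin.sum_univ_succ, apply_zero w]
  congr 1
  refine Finset.sum_congr rfl fun i _ => ?_
  rw [prefixOf_cons_succ]
  rfl

variable [Fintype Y]

lemma pathExpect_succ (κ : PrefixFun Y (n + 1)) (r : (Fin (n + 1) → Y) → ℝ) :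
    pathExpect κ r =
      ∑ c, head κ c * pathExpect (tail κ c) (fun y => r (Fin.cons c y)) := by
  rw [pathExpect, ← (Fin.consEquiv fun _ => Y).sum_comp, Fintype.sum_prod_type]
  refine Fintype.sum_congr _ _ fun c => ?_
  rw [pathExpect, Finset.mul_sum]
  refine Fintype.sum_congr _ _ fun y => ?_
  rw [← mul_assoc, ← pathProd_cons]
  rfl

lemma pathExpect_mono {κ : PrefixFun Y n} (hκ : ∀ i ypre c, 0 ≤ κ i ypre c)
    {r s : (Fin n → Y) → ℝ} (h : ∀ y, r y ≤ s y) : pathExpect κ r ≤ pathExpect κ s :=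
  Finset.sum_le_sum fun y _ =>
    mul_le_mul_of_nonneg_left (h y) (Finset.prod_nonneg fun _ _ => hκ _ _ _)

lemma sum_head_eq_one {κ : PrefixFun Y (n + 1)} (hκ : ∀ i ypre, ∑ c, κ i ypre c = 1) :
    ∑ c, head κ c = 1 :=
  hκ 0 _

lemma pathExpect_le_of_le_add_pathSum {κ w : PrefixFun Y n}
    (hκ0 : ∀ i ypre c, 0 ≤ κ i ypre c) (hκ1 : ∀ i ypre, ∑ c, κ i ypre c = 1)
    (hw : ∀ i ypre, ∑ c, κ i ypre c * w i ypre c ≤ 0)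
    {r : (Fin n → Y) → ℝ} {a : ℝ} (h : ∀ y, r y ≤ a + pathSum w y) :
    pathExpect κ r ≤ a := by
  induction n generalizing a with
  | zero =>
    refine (pathExpect_mono hκ0 h).trans_eq ?_
    simp [pathExpect, pathProd, pathSum]
  | succ n ih =>
    have hrest : ∀ c, pathExpect (tail κ c) (fun y => r (Fin.cons c y)) ≤ a + head w c :=
      fun c => ih (κ := tail κ c) (w := tail w c) (fun i _ => hκ0 i.succ _)
        (fun i _ => hκ1 i.succ _) (fun i _ => hw i.succ _) fun y => by
          rw [add_assoc, ← pathSum_cons]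
          exact h _
    calc pathExpect κ r
        ≤ ∑ c, head κ c * (a + head w c) := by
          rw [pathExpect_succ]
          exact Finset.sum_le_sum fun c _ => mul_le_mul_of_nonneg_left (hrest c) (hκ0 _ _ _)
      _ = a + ∑ c, head κ c * head w c := by
          simp only [mul_add, Finset.sum_add_distrib, ← Finset.sum_mul, sum_head_eq_one hκ1,
            one_mul]
      _ ≤ a := add_le_of_nonpos_right (hw 0 _)

/-- The witness is the sequence of increments of the martingale of conditional expectations
of `r` given the outputs so far. -/
lemma exists_pathSum_eq_sub_pathExpect {κ : PrefixFun Y n}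
    (hκ : ∀ i ypre, ∑ c, κ i ypre c = 1) (r : (Fin n → Y) → ℝ) :
    ∃ w : PrefixFun Y n, (∀ i ypre, ∑ c, κ i ypre c * w i ypre c = 0) ∧
      ∀ y, pathSum w y = r y - pathExpect κ r := by
  induction n with
  | zero =>
    refine ⟨fun i => i.elim0, fun i => i.elim0, fun y => ?_⟩
    simp [pathSum, pathExpect, pathProd, Subsingleton.elim _ y]
  | succ n ih =>
    choose w hw₀ hw using fun c =>
      ih (κ := tail κ c) (fun i _ => hκ i.succ _) (fun y => r (Fin.cons c y))
    refine ⟨cons (fun c => pathExpect (tail κ c) (fun y => r (Fin.cons c y)) - pathExpect κ r)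
      w, Fin.cases (fun ypre => ?_) (fun i ypre => ?_), Fin.consCases fun c y => ?_⟩
    · rw [apply_zero κ, apply_zero (cons _ w)]
      simp only [head_cons, mul_sub, Finset.sum_sub_distrib, ← Finset.sum_mul,
        sum_head_eq_one hκ, one_mul, ← pathExpect_succ, sub_self]
    · rw [apply_succ κ, apply_succ (cons _ w), tail_cons]
      exact hw₀ _ i _
    · rw [pathSum_cons, head_cons, tail_cons, hw]
      ring

end PrefixFun

open PrefixFun

theorem dmc_feedback_game_iff_coding_scheme_general {X Y : Type*} [Fintype Y]
    (p : X → Y → ℝ) (hp0 : ∀ x y, 0 ≤ p x y) (hp1 : ∀ x, ∑ y, p x y = 1)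
    (n L : ℕ) (ε : ℝ) :
    GuaranteedWin
      (fun _ : Fin 1 => ⋃ x : X, {a : Y → ℝ | ∑ y, p x y * a y ≤ 0}) n L ε
    ↔ ∃ (f : (i : Fin n) → Fin L → (Fin i.1 → Y) → X) (g : (Fin n → Y) → Fin L),
        ∀ m : Fin L,
          ∑ y : Fin n → Y,
            (if g y = m then 0 else ∏ i, p (f i m (prefixOf y i)) (y i)) ≤ ε := by
  let law (f : (i : Fin n) → Fin L → (Fin i.1 → Y) → X) (m : Fin L) : PrefixFun Y n :=
    fun i ypre => p (f i m ypre)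
  have error_eq f (g : (Fin n → Y) → Fin L) m :
      ∑ y : Fin n → Y, (if g y = m then 0 else ∏ i, p (f i m (prefixOf y i)) (y i)) =
        pathExpect (law f m) fun y => if g y = m then 0 else 1 := by
    simp only [pathExpect, mul_ite, mul_zero, mul_one]
    rfl
  constructor
  · rintro ⟨_, w, dec, hmem, hscore⟩
    choose f hf using fun i m ypre => Set.mem_iUnion.1 (hmem i m ypre)
    refine ⟨f, dec, fun m => ?_⟩
    rw [error_eq]
    refine pathExpect_le_of_le_add_pathSum (κ := law f m) (w := fun i => w i m)
      (fun _ _ _ => hp0 _ _) (fun _ _ => hp1 _) (fun i _ => hf i m _) fun y => ?_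
    simp only [pathSum]
    linarith [hscore m y]
  · rintro ⟨f, g, hfg⟩
    choose w hw₀ hw using fun m =>
      exists_pathSum_eq_sub_pathExpect (fun _ _ => hp1 _) fun y => if g y = m then 0 else 1
    refine ⟨fun _ _ => 0, fun i m => w m i, g, fun i m ypre => ?_, fun m y => ?_⟩
    · exact Set.mem_iUnion.2 ⟨f i m ypre, (hw₀ m i ypre).le⟩
    · have hgain := hw m y
      simp only [pathSum] at hgain
      linarith [error_eq f g m ▸ hfg m]

/-- The channel coding game for the feedback-DMC cone
`W_dmcfb(0) = ⋃_{x∈X} (p_{Y|X}(·|x))°` is a guaranteed win iff a feedback coding scheme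
for the DMC `p_{Y|X}` with blocklength `n`, message cardinality `L` and maximum error
probability `ε` exists. -/
theorem dmc_feedback_game_iff_coding_scheme {X Y : Type*} [Fintype X] [Fintype Y]
    (p : X → Y → ℝ) (hp0 : ∀ x y, 0 ≤ p x y) (hp1 : ∀ x, ∑ y, p x y = 1)
    (n L : ℕ) (hn : 0 < n) (hL : 0 < L) (ε : ℝ) (hε0 : 0 < ε) (hε1 : ε < 1) :
    GuaranteedWin
      (fun _ : Fin 1 => ⋃ x : X, {a : Y → ℝ | ∑ y, p x y * a y ≤ 0}) n L ε
    ↔ ∃ (f : (i : Fin n) → Fin L → (Fin i.1 → Y) → X) (g : (Fin n → Y) → Fin L),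
        ∀ m : Fin L,
          ∑ y : Fin n → Y,
            (if g y = m then 0 else ∏ i, p (f i m (prefixOf y i)) (y i)) ≤ ε :=
  dmc_feedback_game_iff_coding_scheme_general p hp0 hp1 n L ε

end
end

section
/- Let X, Z, V, Y be finite sets and p_{Y|X,Z,V} a conditional probability distribution from X × Z × V to Y. Define W : X → DCCone(Y) by W(x) := ⋃_{z∈Z} {a ∈ ℝ^Y : Σ_{y∈Y} p_{Y|X,Z,V}(y|x,z,v) a(y) ≤ 0 for every v ∈ V}. Then for all positive integers n, L and every 0 < ε < 1, the channel coding game (W, n, L, ε) is a guaranteed win if and only if there exists an AVCF coding scheme for p_{Y|X,Z,V} with blocklength n, message cardinality L and maximum error probability at most ε. -/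
/-!
For a fixed message, the error probability of a scheme against an adversary strategy is the
expectation of the error indicator under the causal law of the outputs that the strategy induces.
A winning game strategy supplies increments `w_i` in the cones `W(x_i)`, i.e. with nonpositive
conditional mean under every adversary choice, whose sum dominates the error indicator up to `ε`;
taking expectations bounds the error probability by `ε`.  Conversely, backward induction yields an
optimal adversary together with the increments of its value process; these lie in the cones
`W(x_i)` and sum to the error indicator minus the optimal error probability, which is at most `ε`.
-/

open scoped BigOperators

noncomputable section

namespace AVCF

variable {Y : Type*} {n : ℕ}

/-- The empty history before the first output; `Fin.elim0` has type `Fin 0 → Y`, which is not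
reducibly equal to this one. -/
def nilPrefix : Fin (0 : Fin (n + 1)) → Y := fun k => k.elim0

theorem eq_nilPrefix (pref : Fin (0 : Fin (n + 1)) → Y) : pref = nilPrefix :=
  funext fun k => k.elim0

theorem prefixOf_cons_succ (c : Y) (t : Fin n → Y) (j : Fin n) :
    prefixOf (Fin.cons c t : Fin (n + 1) → Y) j.succ = Fin.cons c (prefixOf t j) := by
  ext k
  exact Fin.cases rfl (fun _ => rfl) k

def causalCons {β : Type*} (a : β) (f : Y → (j : Fin n) → (Fin j → Y) → β) :
    (i : Fin (n + 1)) → (Fin i → Y) → β :=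
  Fin.cases (fun _ => a) fun j (pref : Fin (j + 1) → Y) => f (pref 0) j (Fin.tail pref)

theorem causalCons_zero {β : Type*} (a : β) (f : Y → (j : Fin n) → (Fin j → Y) → β)
    (pref : Fin (0 : Fin (n + 1)) → Y) : causalCons a f 0 pref = a :=
  rfl

theorem causalCons_succ_cons {β : Type*} (a : β) (f : Y → (j : Fin n) → (Fin j → Y) → β)
    (j : Fin n) (c : Y) (t : Fin j → Y) :
    causalCons a f j.succ (Fin.cons c t) = f c j t :=
  rfl

def schemeOutputLaw {X Z V : Type*} (p : X → Z → V → Y → ℝ) (x : Fin n → X)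
    (z : (i : Fin n) → (Fin i → Y) → Z) (v : (i : Fin n) → (Fin i → Y) → (Fin (i + 1) → Z) → V)
    (i : Fin n) (pref : Fin i → Y) : Y → ℝ :=
  p (x i) (z i pref) (v i pref fun j => z ⟨j, lt_of_le_of_lt (Nat.lt_succ_iff.mp j.2) i.2⟩
    fun k => pref ⟨k, k.2.trans_le (Nat.lt_succ_iff.mp j.2)⟩)

variable [Fintype Y]

def causalExpect (g : (i : Fin n) → (Fin i → Y) → Y → ℝ) (h : (Fin n → Y) → ℝ) : ℝ :=
  ∑ y : Fin n → Y, (∏ i, g i (prefixOf y i) (y i)) * h y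

theorem causalExpect_zero (g : (i : Fin 0) → (Fin i → Y) → Y → ℝ) (h : (Fin 0 → Y) → ℝ) :
    causalExpect g h = h Fin.elim0 := by
  simp [causalExpect, Subsingleton.elim _ (Fin.elim0 : Fin 0 → Y)]

theorem causalExpect_succ (g : (i : Fin (n + 1)) → (Fin i → Y) → Y → ℝ)
    (h : (Fin (n + 1) → Y) → ℝ) :
    causalExpect g h = ∑ c, g 0 nilPrefix c *
      causalExpect (fun j pref => g j.succ (Fin.cons c pref)) (fun t => h (Fin.cons c t)) := by
  rw [causalExpect, ← (Fin.consEquiv fun _ => Y).sum_comp, Fintype.sum_prod_type]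
  refine Finset.sum_congr rfl fun c _ => ?_
  rw [causalExpect, Finset.mul_sum]
  refine Finset.sum_congr rfl fun t _ => ?_
  simp only [Fin.consEquiv, Equiv.coe_fn_mk, Fin.prod_univ_succ, Fin.cons_zero, Fin.cons_succ,
    prefixOf_cons_succ, eq_nilPrefix (prefixOf _ 0)]
  ring

theorem causalExpect_ite (g : (i : Fin n) → (Fin i → Y) → Y → ℝ) (P : (Fin n → Y) → Prop)
    [DecidablePred P] :
    causalExpect g (fun y => if P y then 0 else 1) =
      ∑ y, if P y then 0 else ∏ i, g i (prefixOf y i) (y i) := by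
  refine Finset.sum_congr rfl fun y _ => ?_
  by_cases hP : P y <;> simp [hP]

theorem causalExpect_le_of_le_sum_add (g w : (i : Fin n) → (Fin i → Y) → Y → ℝ)
    (h : (Fin n → Y) → ℝ) (b : ℝ) (hg0 : ∀ i pref c, 0 ≤ g i pref c)
    (hg1 : ∀ i pref, ∑ c, g i pref c = 1) (hw : ∀ i pref, ∑ c, g i pref c * w i pref c ≤ 0)
    (hh : ∀ y, h y ≤ ∑ i, w i (prefixOf y i) (y i) + b) :
    causalExpect g h ≤ b := by
  induction n generalizing b with
  | zero => simpa [causalExpect_zero] using hh Fin.elim0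
  | succ n ih =>
    have hstep : ∀ c, causalExpect (fun j pref => g j.succ (Fin.cons c pref))
        (fun t => h (Fin.cons c t)) ≤ w 0 nilPrefix c + b := fun c =>
      ih _ (fun j pref => w j.succ (Fin.cons c pref)) _ _ (fun _ _ _ => hg0 _ _ _)
        (fun _ _ => hg1 _ _) (fun _ _ => hw _ _) fun t => by
          have := hh (Fin.cons c t)
          simp only [Fin.sum_univ_succ, Fin.cons_zero, Fin.cons_succ, prefixOf_cons_succ,
            eq_nilPrefix (prefixOf _ 0)] at this
          linarith
    calc causalExpect g h
        ≤ ∑ c, g 0 nilPrefix c * (w 0 nilPrefix c + b) := by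
          rw [causalExpect_succ]
          exact Finset.sum_le_sum fun c _ => mul_le_mul_of_nonneg_left (hstep c) (hg0 _ _ _)
      _ = ∑ c, g 0 nilPrefix c * w 0 nilPrefix c + b := by
          simp only [mul_add, Finset.sum_add_distrib, ← Finset.sum_mul, hg1, one_mul]
      _ ≤ b := by linarith [hw 0 nilPrefix]

/-- Backward induction: `s` is an optimal adversary for the game with payoff `h`, and `w` are the
increments of its value process. -/
theorem exists_strategy_eq_sum_add_causalExpect {V : Type*} [Finite V] [Nonempty V]
    (K : (i : Fin n) → (Fin i → Y) → V → Y → ℝ) (hK : ∀ i pref v, ∑ c, K i pref v c = 1)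
    (h : (Fin n → Y) → ℝ) :
    ∃ (s : (i : Fin n) → (Fin i → Y) → V) (w : (i : Fin n) → (Fin i → Y) → Y → ℝ),
      (∀ i pref v, ∑ c, K i pref v c * w i pref c ≤ 0) ∧
      ∀ y, h y = ∑ i, w i (prefixOf y i) (y i) +
        causalExpect (fun i pref => K i pref (s i pref)) h := by
  induction n with
  | zero =>
    refine ⟨fun i => i.elim0, fun i => i.elim0, fun i => i.elim0, fun y => ?_⟩
    simp [causalExpect_zero, Subsingleton.elim y Fin.elim0]
  | succ n ih =>
    choose s' w' hw' hh' using fun c : Y =>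
      ih (fun j pref => K j.succ (Fin.cons c pref)) (fun _ _ _ => hK _ _ _)
        (fun t => h (Fin.cons c t))
    set e : Y → ℝ := fun c => causalExpect (fun j pref => K j.succ (Fin.cons c pref) (s' c j pref))
      (fun t => h (Fin.cons c t))
    obtain ⟨v₀, hv₀⟩ := Finite.exists_max fun v => ∑ c, K 0 nilPrefix v c * e c
    set M := ∑ c, K 0 nilPrefix v₀ c * e c
    refine ⟨causalCons v₀ s', causalCons (fun c => e c - M) w', fun i => ?_, fun y => ?_⟩
    · refine Fin.cases (fun pref v => ?_) (fun j pref v => ?_) i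
      · rw [causalCons_zero, eq_nilPrefix pref]
        simp only [mul_sub, Finset.sum_sub_distrib, ← Finset.sum_mul, hK, one_mul]
        linarith [hv₀ v]
      · change Fin (j + 1) → Y at pref
        rw [← Fin.cons_self_tail pref, causalCons_succ_cons]
        exact hw' _ _ _ _
    · refine Fin.consCases (fun c t => ?_) y
      have hM : causalExpect (fun i pref => K i pref (causalCons v₀ s' i pref)) h = M := by
        simp only [causalExpect_succ, causalCons_zero, causalCons_succ_cons, e, M]
      rw [hM, Fin.sum_univ_succ, hh' c t]
      simp only [causalCons_zero, causalCons_succ_cons, Fin.cons_zero, Fin.cons_succ,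
        prefixOf_cons_succ]
      ring

end AVCF

open AVCF in
theorem avcf_game_iff_coding_scheme_general {X Z V Y : Type*}
    [Fintype V] [Fintype Y]
    (p : X → Z → V → Y → ℝ)
    (hp0 : ∀ x z v y, 0 ≤ p x z v y) (hp1 : ∀ x z v, ∑ y, p x z v y = 1)
    (n L : ℕ) (hn : 0 < n) (ε : ℝ) (hε0 : 0 < ε) :
    GuaranteedWin
      (fun x => ⋃ z : Z, {a : Y → ℝ | ∀ v : V, ∑ y, p x z v y * a y ≤ 0}) n L ε
    ↔ ∃ (x : Fin L → Fin n → X)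
        (z : (i : Fin n) → Fin L → (Fin i.1 → Y) → Z)
        (dec : (Fin n → Y) → Fin L),
        ∀ (m : Fin L)
          (v : (i : Fin n) → Fin L → (Fin i.1 → Y) → (Fin (i.1 + 1) → Z) → V),
          ∑ y : Fin n → Y,
            (if dec y = m then 0 else
              ∏ i, p (x m i) (z i m (prefixOf y i))
                (v i m (prefixOf y i)
                  (fun j => z ⟨j.1, lt_of_le_of_lt (Nat.lt_succ_iff.mp j.2) i.2⟩ m
                    (fun k => y ⟨k.1, k.2.trans (lt_of_le_of_lt (Nat.lt_succ_iff.mp j.2) i.2)⟩)))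
                (y i)) ≤ ε := by
  constructor
  · rintro ⟨x, w, dec, hw, hwin⟩
    choose z hz using fun i m pref => Set.mem_iUnion.1 (hw i m pref)
    refine ⟨x, z, dec, fun m v => ?_⟩
    refine (causalExpect_ite (schemeOutputLaw p (x m) (fun i => z i m) (fun i => v i m))
      (dec · = m)).symm.trans_le ?_
    refine causalExpect_le_of_le_sum_add _ (fun i => w i m) _ _ (fun _ _ _ => hp0 _ _ _ _)
      (fun _ _ => hp1 _ _ _) (fun i pref => hz i m pref _) fun y => ?_
    linarith [hwin m y]
  · rintro ⟨x, z, dec, hscheme⟩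
    rcases isEmpty_or_nonempty V with hV | hV
    · refine ⟨x, fun _ _ _ _ => 1, dec, fun i m pref => Set.mem_iUnion.2 ⟨z i m pref, hV.elim⟩,
        fun m y => ?_⟩
      have : (1 : ℝ) ≤ n := by exact_mod_cast hn
      simp only [Finset.sum_const, Finset.card_univ, Fintype.card_fin, nsmul_eq_mul, mul_one]
      split_ifs <;> linarith
    choose s w hw hh using fun m => exists_strategy_eq_sum_add_causalExpect
      (fun i pref v c => p (x m i) (z i m pref) v c) (fun _ _ _ => hp1 _ _ _)
      (fun y => if dec y = m then 0 else 1)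
    refine ⟨x, fun i m => w m i, dec, fun i m pref => Set.mem_iUnion.2 ⟨z i m pref, hw m i pref⟩,
      fun m y => ?_⟩
    have herr := (causalExpect_ite (fun i pref c => p (x m i) (z i m pref) (s m i pref) c)
      (dec · = m)).trans_le (hscheme m fun i _ pref _ => s m i pref)
    linarith [hh m y]

/-- The channel coding game for the AVCF cone
`W(x) = ⋃_{z∈Z} ⋂_{v∈V} (p_{Y|X,Z,V}(·|x,z,v))°` is a guaranteed win iff an AVCF coding
scheme for `p_{Y|X,Z,V}` with blocklength `n`, message cardinality `L` and maximum error
probability at most `ε` exists.  Here the AVCF scheme consists of noncausal inputs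
`x : [L] → Xⁿ`, causal inputs `z_i : [L] × Y^{i-1} → Z` and a decoder, and for every
message `m` and adversary strategy `v_i : [L] × Y^{i-1} × Zⁱ → V`, the probability of a
decoding error (written as an explicit finite sum over output sequences) is at most `ε`. -/
theorem avcf_game_iff_coding_scheme {X Z V Y : Type*}
    [Fintype X] [Fintype Z] [Fintype V] [Fintype Y]
    (p : X → Z → V → Y → ℝ)
    (hp0 : ∀ x z v y, 0 ≤ p x z v y) (hp1 : ∀ x z v, ∑ y, p x z v y = 1)
    (n L : ℕ) (hn : 0 < n) (hL : 0 < L) (ε : ℝ) (hε0 : 0 < ε) (hε1 : ε < 1) :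
    GuaranteedWin
      (fun x => ⋃ z : Z, {a : Y → ℝ | ∀ v : V, ∑ y, p x z v y * a y ≤ 0}) n L ε
    ↔ ∃ (x : Fin L → Fin n → X)
        (z : (i : Fin n) → Fin L → (Fin i.1 → Y) → Z)
        (dec : (Fin n → Y) → Fin L),
        ∀ (m : Fin L)
          (v : (i : Fin n) → Fin L → (Fin i.1 → Y) → (Fin (i.1 + 1) → Z) → V),
          ∑ y : Fin n → Y,
            (if dec y = m then 0 else
              ∏ i, p (x m i) (z i m (prefixOf y i))
                (v i m (prefixOf y i)
                  (fun j => z ⟨j.1, lt_of_le_of_lt (Nat.lt_succ_iff.mp j.2) i.2⟩ m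
                    (fun k => y ⟨k.1, k.2.trans (lt_of_le_of_lt (Nat.lt_succ_iff.mp j.2) i.2)⟩)))
                (y i)) ≤ ε :=
  avcf_game_iff_coding_scheme_general p hp0 hp1 n L hn ε hε0

end
end

section
/- Let X and Y be finite sets, 0 < ε < 1, and let p_{Y|X} and q_{Y|X} be conditional probability distributions from X to Y such that q_{Y|X}(y|x) ≥ (1−ε)·p_{Y|X}(y|x) for all x ∈ X and y ∈ Y. Let A := ⋃_{x∈X} (p_{Y|X}(·|x))° and B := ⋃_{x∈X} (q_{Y|X}(·|x))°. Then A ⊕_ε ℝ_{≤0}^Y ⊆ B, where ℝ_{≤0}^Y := {a ∈ ℝ^Y : a(y) ≤ 0 for all y ∈ Y}. -/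
open scoped BigOperators

noncomputable section

/-- Min-plus combination `A ⊕_λ B` of two pricing DC cones. -/
def minPlus {Y : Type*} (A B : Set (Y → ℝ)) (lam : ℝ) : Set (Y → ℝ) :=
  {s | ∃ a ∈ A, ∃ b ∈ B, ∃ t : ℝ,
    s = fun y => min (a y - lam * t) (b y + (1 - lam) * t)}

/-- If `q_{Y|X}(y|x) ≥ (1-ε) p_{Y|X}(y|x)` pointwise, then the robustified channel cone
`A ⊕_ε ℝ_{≤0}^Y` is contained in `B`, where `A = ⋃_x (p_{Y|X}(·|x))°` and
`B = ⋃_x (q_{Y|X}(·|x))°`. -/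
theorem minPlus_robust_subset {X Y : Type*} [Fintype X] [Fintype Y]
    (ε : ℝ) (hε0 : 0 < ε) (hε1 : ε < 1)
    (p q : X → Y → ℝ)
    (hp0 : ∀ x y, 0 ≤ p x y) (hp1 : ∀ x, ∑ y, p x y = 1)
    (hq0 : ∀ x y, 0 ≤ q x y) (hq1 : ∀ x, ∑ y, q x y = 1)
    (hpq : ∀ x y, (1 - ε) * p x y ≤ q x y) :
    minPlus (⋃ x : X, {a : Y → ℝ | ∑ y, p x y * a y ≤ 0})
        {a : Y → ℝ | ∀ y, a y ≤ 0} ε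
      ⊆ ⋃ x : X, {a : Y → ℝ | ∑ y, q x y * a y ≤ 0} := by
  rintro s ⟨a, ha, b, hb, t, rfl⟩
  simp only [Set.mem_iUnion, Set.mem_setOf_eq] at ha ⊢
  obtain ⟨x, ha⟩ := ha
  refine ⟨x, ?_⟩
  have key : ∀ y, q x y * min (a y - ε * t) (b y + (1 - ε) * t) ≤
      (1 - ε) * p x y * (a y - ε * t) + (q x y - (1 - ε) * p x y) * ((1 - ε) * t) := by
    intro y
    have h1 : min (a y - ε * t) (b y + (1 - ε) * t) ≤ a y - ε * t := min_le_left _ _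
    have h2 : min (a y - ε * t) (b y + (1 - ε) * t) ≤ (1 - ε) * t := by
      have := min_le_right (a y - ε * t) (b y + (1 - ε) * t)
      have := hb y
      linarith
    have hc1 : 0 ≤ (1 - ε) * p x y := mul_nonneg (by linarith) (hp0 x y)
    have hc2 : 0 ≤ q x y - (1 - ε) * p x y := by linarith [hpq x y]
    nlinarith [mul_le_mul_of_nonneg_left h1 hc1, mul_le_mul_of_nonneg_left h2 hc2]
  calc ∑ y, q x y * min (a y - ε * t) (b y + (1 - ε) * t)
      ≤ ∑ y, ((1 - ε) * p x y * (a y - ε * t) + (q x y - (1 - ε) * p x y) * ((1 - ε) * t)) :=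
        Finset.sum_le_sum fun y _ => key y
    _ = (1 - ε) * (∑ y, p x y * a y) - (1 - ε) * ε * t * (∑ y, p x y)
          + (1 - ε) * t * ((∑ y, q x y) - (1 - ε) * (∑ y, p x y)) := by
        rw [Finset.sum_congr rfl (fun y _ => by ring : ∀ y ∈ Finset.univ,
          (1 - ε) * p x y * (a y - ε * t) + (q x y - (1 - ε) * p x y) * ((1 - ε) * t)
          = (1 - ε) * (p x y * a y) - (1 - ε) * ε * t * p x y
            + ((1 - ε) * t * q x y - (1 - ε) * t * (1 - ε) * p x y))]
        simp only [Finset.sum_add_distrib, Finset.sum_sub_distrib, ← Finset.mul_sum]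
        ring
    _ = (1 - ε) * (∑ y, p x y * a y) := by rw [hp1, hq1]; ring
    _ ≤ 0 := mul_nonpos_of_nonneg_of_nonpos (by linarith) ha

end
end

section
/- Let Y be a finite set and A, B ∈ DCCone(Y). Then (A ∩ B)□ = cl(A□ ∪ B□), where cl denotes the closure in ℝ^Y with its standard topology. -/
open scoped BigOperators

noncomputable section

/-- Dual DC cone `A□`. -/
def dualCone {Y : Type*} (A : Set (Y → ℝ)) : Set (Y → ℝ) :=
  {c | ∀ a ∈ A, ∃ y, a y + c y ≤ 0}

lemma dualCone_isClosed {Y : Type*} [Fintype Y] (S : Set (Y → ℝ)) :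
    IsClosed (dualCone S) := by
  have h : dualCone S = ⋂ a ∈ S, ⋃ y : Y, {c : Y → ℝ | a y + c y ≤ 0} := by
    ext c
    simp [dualCone]
  rw [h]
  refine isClosed_biInter fun a _ => isClosed_iUnion_of_finite fun y => ?_
  exact isClosed_le (by continuity) continuous_const

/-- For pricing DC cones `A, B` over a finite set `Y`,
`(A ∩ B)□ = cl(A□ ∪ B□)` (closure in the standard topology on `ℝ^Y`). -/
theorem dualCone_inter {Y : Type*} [Fintype Y]
    (A B : Set (Y → ℝ)) (hA : IsDCCone A) (hB : IsDCCone B) :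
    dualCone (A ∩ B) = closure (dualCone A ∪ dualCone B) := by
  apply Set.Subset.antisymm
  · intro c hc
    rw [Metric.mem_closure_iff]
    intro ε hε
    refine ⟨c - (fun _ => ε / 2), ?_, ?_⟩
    · by_contra hmem
      have hnA : c - (fun _ => ε / 2) ∉ dualCone A := fun h => hmem (Or.inl h)
      have hnB : c - (fun _ => ε / 2) ∉ dualCone B := fun h => hmem (Or.inr h)
      simp only [dualCone, Set.mem_setOf_eq, not_forall, not_exists, not_le] at hnA hnB
      obtain ⟨a, ha, hay⟩ := hnA
      obtain ⟨b, hb, hby⟩ := hnB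
      set m : Y → ℝ := fun y => min (a y) (b y) with hm
      have hmA : m ∈ A := by
        have := hA.2 a ha (a - m) (fun y => by
          simp [hm, sub_nonneg, min_le_left])
        simpa using this
      have hmB : m ∈ B := by
        have := hB.2 b hb (b - m) (fun y => by
          simp [hm, sub_nonneg, min_le_right])
        simpa using this
      obtain ⟨y, hy⟩ := hc m ⟨hmA, hmB⟩
      have h1 := hay y
      have h2 := hby y
      simp only [Pi.sub_apply] at h1 h2
      have : m y + c y > ε / 2 := by
        rcases min_choice (a y) (b y) with h | h <;>
          simp only [hm, h] <;> linarith
      linarith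
    · have hle : dist c (c - fun _ => ε / 2) ≤ ε / 2 := by
        rw [dist_pi_le_iff (by positivity)]
        intro y
        simp only [Pi.sub_apply, Real.dist_eq, sub_sub_cancel]
        rw [abs_of_nonneg (le_of_lt (half_pos hε))]
      linarith
  · refine closure_minimal (Set.union_subset ?_ ?_) (dualCone_isClosed _)
    · intro c hc a ha
      exact hc a ha.1
    · intro c hc a ha
      exact hc a ha.2

end
end

section
/- Let Y be any set and A ∈ DCCone(Y). Then A ⊆ A□□ ⊆ cl_∞(A), where cl_∞(A) denotes the closure of A in ℝ^Y with respect to the (extended) sup metric d(a,b) = sup_{y∈Y} |a(y) − b(y)|. Moreover, if Y is finite, then A□□ = cl(A), the closure of A in ℝ^Y with its standard topology. -/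
open scoped BigOperators

noncomputable section

/-- Closure of `A ⊆ ℝ^Y` with respect to the (extended) sup metric
`d(a,b) = sup_y |a(y) - b(y)|`. -/
def supMetricClosure {Y : Type*} (A : Set (Y → ℝ)) : Set (Y → ℝ) :=
  {c | ∀ ε : ℝ, 0 < ε → ∃ a ∈ A, ∀ y, |c y - a y| ≤ ε}

/-- For any set `Y` and pricing DC cone `A` over `Y`, we have `A ⊆ A□□ ⊆ cl_∞(A)`;
moreover, if `Y` is finite, then `A□□ = cl(A)` (closure in the standard product
topology on `ℝ^Y`). -/
theorem double_dual_between {Y : Type*} (A : Set (Y → ℝ)) (hA : IsDCCone A) :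
    A ⊆ dualCone (dualCone A)
      ∧ dualCone (dualCone A) ⊆ supMetricClosure A
      ∧ (Finite Y → dualCone (dualCone A) = closure A) := by
  obtain ⟨hscale, hdown⟩ := hA
  have h12 : dualCone (dualCone A) ⊆ supMetricClosure A := by
    intro c hc
    by_contra hnot
    simp only [supMetricClosure, Set.mem_setOf_eq] at hnot
    push_neg at hnot
    obtain ⟨ε, hε, hfar⟩ := hnot
    have hmem : (fun y => ε - c y) ∈ dualCone A := by
      intro a ha
      by_contra hno
      push_neg at hno
      set b : Y → ℝ := fun y => max (a y - (c y + ε)) 0 with hb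
      have ha' : a - b ∈ A := hdown a ha b (fun y => le_max_right _ _)
      obtain ⟨y, hy⟩ := hfar (a - b) ha'
      have h1 : 0 < a y + (ε - c y) := hno y
      have h2 : (a - b) y = a y - max (a y - (c y + ε)) 0 := rfl
      have key : |c y - (a - b) y| ≤ ε := by
        rcases le_total (a y) (c y + ε) with h | h
        · rw [h2, max_eq_right (by linarith), sub_zero, abs_le]
          constructor <;> linarith
        · rw [h2, max_eq_left (by linarith), abs_le]
          constructor <;> · ring_nf; linarith
      linarith
    obtain ⟨y, hy⟩ := hc _ hmem
    have hy' : ε - c y + c y ≤ 0 := hy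
    linarith
  refine ⟨?_, h12, ?_⟩
  · intro a ha c hc
    obtain ⟨y, hy⟩ := hc a ha
    exact ⟨y, by linarith⟩
  · intro hfin
    haveI := Fintype.ofFinite Y
    apply Set.Subset.antisymm
    · intro c hc
      rw [Metric.mem_closure_iff]
      intro ε hε
      obtain ⟨a, ha, hclose⟩ := h12 hc (ε / 2) (by linarith)
      refine ⟨a, ha, ?_⟩
      rw [dist_pi_lt_iff hε]
      intro y
      rw [Real.dist_eq]
      have := hclose y
      linarith
    · intro c hc d hdc
      by_contra hno
      push_neg at hno
      cases isEmpty_or_nonempty Y with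
      | inl h =>
        have hAne : A.Nonempty := closure_nonempty_iff.mp ⟨c, hc⟩
        obtain ⟨a, ha⟩ := hAne
        obtain ⟨y, _⟩ := hdc a ha
        exact h.elim y
      | inr h =>
        obtain ⟨y₀, _, hy₀⟩ := Finset.exists_min_image Finset.univ
          (fun y => d y + c y) ⟨Classical.arbitrary Y, Finset.mem_univ _⟩
        have hδ : 0 < d y₀ + c y₀ := hno y₀
        rw [Metric.mem_closure_iff] at hc
        obtain ⟨a, ha, hdist⟩ := hc _ hδ
        rw [dist_pi_lt_iff hδ] at hdist
        obtain ⟨y, hy⟩ := hdc a ha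
        have h1 := hdist y
        rw [Real.dist_eq] at h1
        have h2 : d y₀ + c y₀ ≤ d y + c y := hy₀ y (Finset.mem_univ y)
        have h3 := abs_lt.mp h1
        obtain ⟨h3a, h3b⟩ := h3
        linarith

end
end
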